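/- arXiv:1905.07759 — 6 statements merged into one kernel-verified Lean document; each statement's English description precedes it below -/
import Mathlib

section
/- Let N ≥ 2, 1 < q < 1* := N/(N-1), a > 0, b > 0, and let g(t) := ((1+t)^{1/b} - 1)(1+t)^{(q-1)(N/a - (N-1)/b)} / t^{(q-1)N/a} for t > 0. If a > N(q-1), then inf_{t>0} g(t) = 0, while if a < N(q-1), then inf_{t>0} g(t) > 0 and the infimum is attained at some t₀ ∈ (0, ∞). -/
open Real Filter Topology Set

/-!
Write `g = vanishingProfile b c d` with `c = (q-1)(N/a - (N-1)/b)` and `d = (q-1)N/a`.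
Near `0`, `g t ≈ t^(1-d) / b`, so `g → 0` when `d < 1`, i.e. `a > N(q-1)`, and `g → ∞` when
`d > 1`. Near `∞`, `g t ≈ t^(1/b + c - d)` with `1/b + c - d = (1 - (q-1)(N-1))/b`, which is
positive exactly because `q < N/(N-1)`. So for `a < N(q-1)` the positive continuous function `g`
blows up at both ends of `(0, ∞)` and attains its infimum there.
-/

lemma csInf_image_eq_of_tendsto {α β : Type*} [ConditionallyCompleteLinearOrder β]
    [TopologicalSpace β] [OrderTopology β] {f : α → β} {s : Set α} {l : Filter α} [l.NeBot]
    {m : β} (hs : s ∈ l) (hm : ∀ x ∈ s, m ≤ f x) (hf : Tendsto f l (𝓝 m)) :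
    sInf (f '' s) = m := by
  have hne : s.Nonempty := Filter.nonempty_of_mem hs
  refine csInf_eq_of_forall_ge_of_forall_gt_exists_lt (hne.image f)
    (forall_mem_image.2 hm) fun w hw => ?_
  obtain ⟨y, hyw, hys⟩ := ((hf.eventually_lt_const hw).and hs).exists
  exact ⟨f y, mem_image_of_mem f hys, hyw⟩

lemma IsMinOn.csInf_image_eq {α β : Type*} [ConditionallyCompleteLinearOrder β] {f : α → β}
    {s : Set α} {x : α} (hx : x ∈ s) (h : IsMinOn f s x) : sInf (f '' s) = f x :=
  IsLeast.csInf_eq ⟨mem_image_of_mem f hx, forall_mem_image.2 h⟩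

lemma ContinuousOn.exists_isMinOn_Ioi_zero {f : ℝ → ℝ} (hf : ContinuousOn f (Ioi 0))
    (h0 : Tendsto f (𝓝[>] 0) atTop) (hTop : Tendsto f atTop atTop) :
    ∃ t₀ ∈ Ioi 0, IsMinOn f (Ioi 0) t₀ := by
  -- `exp` turns `(0, ∞)` into `ℝ`, where both ends together form the cocompact filter.
  have hcont : Continuous (f ∘ exp) := hf.comp_continuous continuous_exp exp_pos
  have hcoc : Tendsto (f ∘ exp) (cocompact ℝ) atTop := by
    rw [cocompact_eq_atBot_atTop]
    exact (h0.comp tendsto_exp_atBot_nhdsGT).sup (hTop.comp tendsto_exp_atTop)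
  obtain ⟨s, hs⟩ := hcont.exists_forall_le hcoc
  refine ⟨exp s, exp_pos s, fun t (ht : 0 < t) => ?_⟩
  simpa [exp_log ht] using hs (Real.log t)

lemma tendsto_slope_one_add_rpow (p : ℝ) :
    Tendsto (fun t : ℝ => t⁻¹ * ((1 + t) ^ p - 1)) (𝓝[>] 0) (𝓝 p) := by
  simpa using
    (hasDerivAt_rpow_const (x := 1) (p := p) (Or.inl one_ne_zero)).tendsto_slope_zero_right

noncomputable def vanishingProfile (b c d t : ℝ) : ℝ :=
  ((1 + t) ^ (1 / b) - 1) * (1 + t) ^ c / t ^ d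

namespace vanishingProfile

variable {b c d : ℝ}

lemma pos (hb : 0 < b) {t : ℝ} (ht : 0 < t) : 0 < vanishingProfile b c d t := by
  have h1 : 1 < (1 + t) ^ (1 / b) := one_lt_rpow (by linarith) (by positivity)
  have : 0 < (1 + t) ^ (1 / b) - 1 := by linarith
  unfold vanishingProfile
  positivity

lemma continuousOn : ContinuousOn (vanishingProfile b c d) (Ioi 0) := by
  intro t (ht : 0 < t)
  have : 1 + t ≠ 0 := by positivity
  have : t ≠ 0 := ht.ne'
  have : t ^ d ≠ 0 := by positivity
  refine ContinuousAt.continuousWithinAt ?_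
  unfold vanishingProfile
  fun_prop (disch := simp_all)

lemma eq_slope_mul_rpow_one_sub {t : ℝ} (ht : 0 < t) :
    vanishingProfile b c d t = t⁻¹ * ((1 + t) ^ (1 / b) - 1) * (1 + t) ^ c * t ^ (1 - d) := by
  rw [vanishingProfile, rpow_sub ht, rpow_one]
  field_simp

lemma eq_mul_rpow_one_div_add_sub {t : ℝ} (ht : 0 < t) :
    vanishingProfile b c d t =
      (1 - (1 + t) ^ (-(1 / b))) * (1 + t⁻¹) ^ d * (1 + t) ^ (1 / b + c - d) := by
  have hu : 0 < 1 + t := by positivity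
  rw [vanishingProfile, show 1 + t⁻¹ = (1 + t) / t by field_simp; ring, div_rpow hu.le ht.le,
    rpow_sub hu, rpow_add hu, rpow_neg hu.le]
  field_simp

lemma tendsto_slope_mul_rpow_nhdsGT_zero :
    Tendsto (fun t => t⁻¹ * ((1 + t) ^ (1 / b) - 1) * (1 + t) ^ c) (𝓝[>] 0)
      (𝓝 (1 / b)) := by
  have h : Tendsto (fun t : ℝ => (1 + t) ^ c) (𝓝[>] 0) (𝓝 1) := by
    have : ContinuousAt (fun t : ℝ => (1 + t) ^ c) 0 := by fun_prop (disch := norm_num)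
    simpa using this.tendsto.mono_left nhdsWithin_le_nhds
  simpa using (tendsto_slope_one_add_rpow (1 / b)).mul h

lemma tendsto_nhdsGT_zero_zero (hd : d < 1) :
    Tendsto (vanishingProfile b c d) (𝓝[>] 0) (𝓝 0) := by
  have h : Tendsto (fun t : ℝ => t ^ (1 - d)) (𝓝[>] 0) (𝓝 0) := by
    have : ContinuousAt (fun t : ℝ => t ^ (1 - d)) 0 :=
      continuousAt_rpow_const 0 _ (Or.inr (by linarith))
    simpa [zero_rpow (by linarith : 1 - d ≠ 0)] using this.tendsto.mono_left nhdsWithin_le_nhds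
  have hlim := (tendsto_slope_mul_rpow_nhdsGT_zero (b := b) (c := c)).mul h
  rw [mul_zero] at hlim
  exact hlim.congr'
    (eventually_nhdsWithin_of_forall fun t ht => (eq_slope_mul_rpow_one_sub ht).symm)

lemma tendsto_nhdsGT_zero_atTop (hb : 0 < b) (hd : 1 < d) :
    Tendsto (vanishingProfile b c d) (𝓝[>] 0) atTop :=
  (tendsto_slope_mul_rpow_nhdsGT_zero.pos_mul_atTop (one_div_pos.2 hb)
    (tendsto_rpow_neg_nhdsGT_zero (by linarith))).congr'
    (eventually_nhdsWithin_of_forall fun t ht => (eq_slope_mul_rpow_one_sub ht).symm)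

lemma tendsto_atTop_atTop (hb : 0 < b) (hcd : d < 1 / b + c) :
    Tendsto (vanishingProfile b c d) atTop atTop := by
  have hplus : Tendsto (fun t : ℝ => 1 + t) atTop atTop :=
    tendsto_atTop_add_const_left _ 1 tendsto_id
  have h1 : Tendsto (fun t : ℝ => 1 - (1 + t) ^ (-(1 / b))) atTop (𝓝 1) := by
    simpa using tendsto_const_nhds.sub ((tendsto_rpow_neg_atTop (one_div_pos.2 hb)).comp hplus)
  have h2 : Tendsto (fun t : ℝ => (1 + t⁻¹) ^ d) atTop (𝓝 1) := by
    have : ContinuousAt (fun x : ℝ => (1 + x) ^ d) 0 := by fun_prop (disch := norm_num)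
    simpa [Function.comp_def] using this.tendsto.comp tendsto_inv_atTop_zero
  have h3 : Tendsto (fun t : ℝ => (1 + t) ^ (1 / b + c - d)) atTop atTop :=
    (tendsto_rpow_atTop (by linarith)).comp hplus
  refine ((h1.mul h2).pos_mul_atTop (by norm_num) h3).congr' ?_
  filter_upwards [eventually_gt_atTop 0] with t ht
  exact (eq_mul_rpow_one_div_add_sub ht).symm

end vanishingProfile

theorem inf_g_dichotomy_general (N : ℕ) (hN : 2 ≤ N) (q a b : ℝ)
    (hq2 : q < (N : ℝ) / ((N : ℝ) - 1)) (ha : 0 < a) (hb : 0 < b) :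
    (a > (N : ℝ) * (q - 1) →
      sInf { r | ∃ t : ℝ, 0 < t ∧
        r = ((1+t) ^ (1/b) - 1) * (1+t) ^ ((q-1)*((N:ℝ)/a - ((N:ℝ)-1)/b)) /
              t ^ ((q-1)*(N:ℝ)/a) } = 0) ∧
    (a < (N : ℝ) * (q - 1) →
      0 < sInf { r | ∃ t : ℝ, 0 < t ∧
        r = ((1+t) ^ (1/b) - 1) * (1+t) ^ ((q-1)*((N:ℝ)/a - ((N:ℝ)-1)/b)) /
              t ^ ((q-1)*(N:ℝ)/a) } ∧
      ∃ t₀ : ℝ, 0 < t₀ ∧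
        ((1+t₀) ^ (1/b) - 1) * (1+t₀) ^ ((q-1)*((N:ℝ)/a - ((N:ℝ)-1)/b)) /
            t₀ ^ ((q-1)*(N:ℝ)/a) =
          sInf { r | ∃ t : ℝ, 0 < t ∧
            r = ((1+t) ^ (1/b) - 1) * (1+t) ^ ((q-1)*((N:ℝ)/a - ((N:ℝ)-1)/b)) /
                  t ^ ((q-1)*(N:ℝ)/a) }) := by
  set c := (q-1)*((N:ℝ)/a - ((N:ℝ)-1)/b)
  set d := (q-1)*(N:ℝ)/a
  set g := vanishingProfile b c d
  have hS : { r | ∃ t : ℝ, 0 < t ∧ r = g t } = g '' Ioi 0 := by ext; simp [eq_comm]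
  have hg : ∀ t : ℝ, ((1 + t) ^ (1 / b) - 1) * (1 + t) ^ c / t ^ d = g t := fun _ => rfl
  simp only [hg, hS]
  have hN1 : (0 : ℝ) < N - 1 := by have : (2 : ℝ) ≤ N := mod_cast hN; linarith
  have hcd : d < 1 / b + c := by
    have : (q - 1) * (N - 1) < 1 := by have := (lt_div_iff₀ hN1).1 hq2; linarith
    have : 1 / b + c - d = (1 - (q - 1) * (N - 1)) / b := by
      simp only [c, d]; field_simp; ring
    linarith [div_pos (by linarith : (0 : ℝ) < 1 - (q - 1) * (N - 1)) hb]
  refine ⟨fun h => ?_, fun h => ?_⟩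
  · have hd : d < 1 := (div_lt_one ha).2 (by linarith)
    exact csInf_image_eq_of_tendsto self_mem_nhdsWithin
      (fun t ht => (vanishingProfile.pos hb ht).le)
      (vanishingProfile.tendsto_nhdsGT_zero_zero hd)
  · have hd : 1 < d := (one_lt_div ha).2 (by linarith)
    obtain ⟨t₀, ht₀, hmin⟩ := vanishingProfile.continuousOn.exists_isMinOn_Ioi_zero
      (vanishingProfile.tendsto_nhdsGT_zero_atTop hb hd)
      (vanishingProfile.tendsto_atTop_atTop hb hcd)
    rw [hmin.csInf_image_eq ht₀]
    exact ⟨vanishingProfile.pos hb ht₀, t₀, ht₀, rfl⟩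

/-- behavior of `inf_{t>0} g(t)` according to the sign of `a - N(q-1)`. -/
theorem inf_g_dichotomy (N : ℕ) (hN : 2 ≤ N) (q a b : ℝ) (hq1 : 1 < q)
    (hq2 : q < (N : ℝ) / ((N : ℝ) - 1)) (ha : 0 < a) (hb : 0 < b) :
    (a > (N : ℝ) * (q - 1) →
      sInf { r | ∃ t : ℝ, 0 < t ∧
        r = ((1+t) ^ (1/b) - 1) * (1+t) ^ ((q-1)*((N:ℝ)/a - ((N:ℝ)-1)/b)) /
              t ^ ((q-1)*(N:ℝ)/a) } = 0) ∧
    (a < (N : ℝ) * (q - 1) →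
      0 < sInf { r | ∃ t : ℝ, 0 < t ∧
        r = ((1+t) ^ (1/b) - 1) * (1+t) ^ ((q-1)*((N:ℝ)/a - ((N:ℝ)-1)/b)) /
              t ^ ((q-1)*(N:ℝ)/a) } ∧
      ∃ t₀ : ℝ, 0 < t₀ ∧
        ((1+t₀) ^ (1/b) - 1) * (1+t₀) ^ ((q-1)*((N:ℝ)/a - ((N:ℝ)-1)/b)) /
            t₀ ^ ((q-1)*(N:ℝ)/a) =
          sInf { r | ∃ t : ℝ, 0 < t ∧
            r = ((1+t) ^ (1/b) - 1) * (1+t) ^ ((q-1)*((N:ℝ)/a - ((N:ℝ)-1)/b)) /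
                  t ^ ((q-1)*(N:ℝ)/a) }) :=
  inf_g_dichotomy_general N hN q a b hq2 ha hb
end

section
/- Let N ≥ 2, q with (2N-1)/(2(N-1)) < q < N/(N-1), a = N(q-1), and b ≥ b₀ := (q-1)(N-1) - (N - (N-1)q). Then for all t > 0, g(t) := ((1+t)^{1/b} - 1)(1+t)^{(q-1)(N/a - (N-1)/b)} / t^{(q-1)N/a} satisfies g(t) > 1/b; consequently inf_{t>0} g(t) = 1/b (the limit as t → 0⁺) and the infimum is not attained. -/
/-!
Since `a = N(q-1)`, the denominator is `t` and `g(t) = ((1+t)^α - (1+t)^β) / t` with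
`β = 1 - (q-1)(N-1)/b` and `α = β + 1/b`, i.e. `g` is the slope at `0` of
`F(x) = (1+x)^α - (1+x)^β`, whose derivative at `0` is `α - β = 1/b`. The bounds on `q` and
`b` give `α > 1` and `α + β ≥ 1`, which make `F'' > 0` on `(0, ∞)`. Two applications of the
mean value theorem then give `g(t) = F'(c) > F'(0) = 1/b`, and `g(t) → F'(0)` as `t → 0⁺`.
-/

open Real Filter Topology Set

lemma hasDerivAt_one_add_rpow (c : ℝ) {x : ℝ} (hx : 0 < 1 + x) :
    HasDerivAt (fun y : ℝ => (1 + y) ^ c) (c * (1 + x) ^ (c - 1)) x := by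
  simpa using ((hasDerivAt_id x).const_add 1).rpow_const (p := c) (Or.inl hx.ne')

section RpowSubRpow

variable {α β : ℝ}

lemma mul_sub_one_mul_rpow_lt (hα : 1 < α) (hβα : β < α) (hαβ : 1 ≤ α + β) {x : ℝ}
    (hx : 0 < x) :
    β * (β - 1) * (1 + x) ^ (β - 2) < α * (α - 1) * (1 + x) ^ (α - 2) := by
  have hx1 : 0 < 1 + x := by linarith
  have hsplit : (1 + x) ^ (α - 2) = (1 + x) ^ (α - β) * (1 + x) ^ (β - 2) := by
    rw [← rpow_add hx1]; ring_nf
  have hpow : 1 < (1 + x) ^ (α - β) := one_lt_rpow (by linarith) (by linarith)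
  -- `α (α - 1) - β (β - 1) = (α - β) (α + β - 1)`
  have hcoef : β * (β - 1) ≤ α * (α - 1) := by nlinarith
  have hα' : 0 < α * (α - 1) := by nlinarith
  rw [hsplit, ← mul_assoc]
  exact mul_lt_mul_of_pos_right (by nlinarith) (rpow_pos_of_pos hx1 _)

lemma sub_lt_slope_rpow_sub_rpow (hα : 1 < α) (hβα : β < α) (hαβ : 1 ≤ α + β) {t : ℝ}
    (ht : 0 < t) : α - β < slope (fun x : ℝ => (1 + x) ^ α - (1 + x) ^ β) 0 t := by
  set F' : ℝ → ℝ := fun x => α * (1 + x) ^ (α - 1) - β * (1 + x) ^ (β - 1)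
  have hF : ∀ x, 0 ≤ x → HasDerivAt (fun x : ℝ => (1 + x) ^ α - (1 + x) ^ β) (F' x) x :=
    fun x hx => (hasDerivAt_one_add_rpow α (by linarith)).sub
      (hasDerivAt_one_add_rpow β (by linarith))
  have hF' : ∀ x, 0 ≤ x → HasDerivAt F'
      (α * (α - 1) * (1 + x) ^ (α - 2) - β * (β - 1) * (1 + x) ^ (β - 2)) x := by
    intro x hx
    have h := ((hasDerivAt_one_add_rpow (α - 1) (x := x) (by linarith)).const_mul α).sub
      ((hasDerivAt_one_add_rpow (β - 1) (x := x) (by linarith)).const_mul β)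
    rw [show α - 1 - 1 = α - 2 by ring, show β - 1 - 1 = β - 2 by ring] at h
    exact h.congr_deriv (by ring)
  have hF'_mono : StrictMonoOn F' (Ici 0) :=
    strictMonoOn_of_hasDerivWithinAt_pos (convex_Ici 0)
      (fun x hx => (hF' x hx).continuousAt.continuousWithinAt)
      (fun x hx => (hF' x (interior_subset hx)).hasDerivWithinAt)
      (fun x hx => sub_pos.2 (mul_sub_one_mul_rpow_lt hα hβα hαβ (by simpa using hx)))
  obtain ⟨c, hc, hslope⟩ := exists_hasDerivAt_eq_slope _ F' ht
    (fun x hx => (hF x hx.1).continuousAt.continuousWithinAt) (fun x hx => hF x hx.1.le)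
  have hF'_zero : F' 0 = α - β := by simp [F']
  rw [slope_def_field, ← hslope, ← hF'_zero]
  exact hF'_mono self_mem_Ici hc.1.le hc.1

lemma tendsto_slope_rpow_sub_rpow (α β : ℝ) :
    Tendsto (slope (fun x : ℝ => (1 + x) ^ α - (1 + x) ^ β) 0) (𝓝[>] 0) (𝓝 (α - β)) := by
  have hderiv := (hasDerivAt_one_add_rpow α (x := 0) (by norm_num)).sub
    (hasDerivAt_one_add_rpow β (x := 0) (by norm_num))
  simp only [add_zero, one_rpow, mul_one] at hderiv
  exact (hasDerivAt_iff_tendsto_slope.mp hderiv).mono_left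
    (nhdsWithin_mono 0 fun x hx => ne_of_gt hx)

end RpowSubRpow

lemma rpow_sub_one_mul_rpow_div_eq_slope (s β : ℝ) {t : ℝ} (ht : 0 < t) :
    ((1 + t) ^ s - 1) * (1 + t) ^ β / t =
      slope (fun x : ℝ => (1 + x) ^ (β + s) - (1 + x) ^ β) 0 t := by
  rw [slope_def_field, rpow_add (by linarith)]
  simp only [add_zero, one_rpow, sub_self, sub_zero]
  ring

lemma sInf_eq_not_attained_of_forall_lt_of_tendsto {f : ℝ → ℝ} {L : ℝ}
    (hlt : ∀ t, 0 < t → L < f t) (hlim : Tendsto f (𝓝[>] 0) (𝓝 L)) :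
    (∀ t, 0 < t → f t > L) ∧ sInf {r | ∃ t, 0 < t ∧ r = f t} = L ∧
      ¬ ∃ t, 0 < t ∧ f t = sInf {r | ∃ t, 0 < t ∧ r = f t} := by
  have hlb : ∀ r ∈ {r | ∃ t, 0 < t ∧ r = f t}, L ≤ r := by
    rintro r ⟨t, ht, rfl⟩
    exact (hlt t ht).le
  have hinf : sInf {r | ∃ t, 0 < t ∧ r = f t} = L := by
    refine le_antisymm (ge_of_tendsto hlim ?_) (le_csInf ⟨f 1, 1, one_pos, rfl⟩ hlb)
    filter_upwards [self_mem_nhdsWithin] with t ht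
    exact csInf_le ⟨L, hlb⟩ ⟨t, ht, rfl⟩
  exact ⟨hlt, hinf, fun ⟨t, ht, h⟩ => (hlt t ht).ne' (h.trans hinf)⟩

/-- in the case `a = N(q-1)`, `(2N-1)/(2(N-1)) < q < N/(N-1)`,
`b ≥ b₀`, one has `g > 1/b` on `(0,∞)`; the infimum equals `1/b` and is not
attained. -/
theorem g_gt_inv_b_of_b_ge_b0 (N : ℕ) (hN : 2 ≤ N) (q a b : ℝ)
    (hq1 : (2*(N:ℝ)-1) / (2*((N:ℝ)-1)) < q) (hq2 : q < (N : ℝ) / ((N : ℝ) - 1))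
    (ha : a = (N : ℝ) * (q - 1))
    (hb : b ≥ (q-1)*((N:ℝ)-1) - ((N:ℝ) - ((N:ℝ)-1)*q)) :
    (∀ t : ℝ, 0 < t →
      ((1+t) ^ (1/b) - 1) * (1+t) ^ ((q-1)*((N:ℝ)/a - ((N:ℝ)-1)/b)) /
          t ^ ((q-1)*(N:ℝ)/a) > 1/b) ∧
    sInf { r | ∃ t : ℝ, 0 < t ∧
        r = ((1+t) ^ (1/b) - 1) * (1+t) ^ ((q-1)*((N:ℝ)/a - ((N:ℝ)-1)/b)) /
              t ^ ((q-1)*(N:ℝ)/a) } = 1/b ∧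
    ¬ ∃ t : ℝ, 0 < t ∧
        ((1+t) ^ (1/b) - 1) * (1+t) ^ ((q-1)*((N:ℝ)/a - ((N:ℝ)-1)/b)) /
            t ^ ((q-1)*(N:ℝ)/a) =
          sInf { r | ∃ t : ℝ, 0 < t ∧
            r = ((1+t) ^ (1/b) - 1) * (1+t) ^ ((q-1)*((N:ℝ)/a - ((N:ℝ)-1)/b)) /
                  t ^ ((q-1)*(N:ℝ)/a) } := by
  have hN' : (1 : ℝ) < N := by exact_mod_cast hN
  have hc_lo : 1 / 2 < (q - 1) * (N - 1) := by
    rw [div_lt_iff₀ (by linarith)] at hq1; linarith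
  have hc_hi : (q - 1) * (N - 1) < 1 := by
    rw [lt_div_iff₀ (by linarith)] at hq2; linarith
  have hq : 0 < q - 1 := pos_of_mul_pos_left (by linarith) (by linarith : (0:ℝ) ≤ N - 1)
  have hb0 : 0 < b := by linarith
  set β := 1 - (q - 1) * (N - 1) / b with hβ
  have hexp_t : (q - 1) * N / a = 1 := by rw [ha]; field_simp
  have hexp_β : (q - 1) * (N / a - (N - 1) / b) = β := by rw [ha, hβ]; field_simp
  simp only [hexp_t, hexp_β, rpow_one]
  have hα : 1 < β + 1 / b := by
    linarith [div_lt_div_of_pos_right hc_hi hb0]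
  have hαβ : 1 ≤ β + 1 / b + β := by
    have : (2 * ((q - 1) * (N - 1)) - 1) / b ≤ 1 := (div_le_one hb0).2 (by linarith)
    linarith [sub_div (2 * ((q - 1) * (N - 1))) 1 b, mul_div_assoc 2 ((q - 1) * (N - 1)) b]
  have hβα : β < β + 1 / b := by simp [hb0]
  apply sInf_eq_not_attained_of_forall_lt_of_tendsto
  · intro t ht
    simpa [rpow_sub_one_mul_rpow_div_eq_slope _ _ ht] using
      sub_lt_slope_rpow_sub_rpow hα hβα hαβ ht
  · have hlim := tendsto_slope_rpow_sub_rpow (β + 1 / b) β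
    rw [add_sub_cancel_left] at hlim
    refine hlim.congr' ?_
    filter_upwards [self_mem_nhdsWithin] with t ht
    exact (rpow_sub_one_mul_rpow_div_eq_slope _ _ ht).symm
end

section
/- Let N ≥ 2, q with (2N-1)/(2(N-1)) < q < N/(N-1), a = N(q-1), and 0 < b < b₀ := (q-1)(N-1) - (N - (N-1)q). Then the function g(t) := ((1+t)^{1/b} - 1)(1+t)^{1 - (q-1)(N-1)/b} / t on (0, ∞) attains its infimum at some t₃ > 0 with g(t₃) < 1/b, so that 0 < inf_{t>0} g(t) < 1/b. -/
/-!
With `c = 1 - (q-1)(N-1)/b`, write `g(t) - 1/b = φ(t) / (b t)` where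
`φ(t) = b(1+t)^(c+1/b) - b(1+t)^c - t`. Then `φ(0) = φ'(0) = 0` and `φ''(0) = 2c + 1/b - 1`,
which is negative exactly when `b < b₀`; so `φ < 0`, i.e. `g < 1/b`, just to the right of `0`.
Since `g → 1/b` at `0⁺` and, because `c + 1/b > 1` (that is `q < N/(N-1)`), `g → ∞` at `∞`,
the infimum of `g` over `(0, ∞)` is a minimum, and it lies below `1/b`.
-/

open Real Filter Topology Set

theorem eventually_nhdsGT_neg_of_second_deriv_neg {f f' : ℝ → ℝ} {x₀ f'' : ℝ}
    (hf : ∀ᶠ x in 𝓝 x₀, HasDerivAt f (f' x) x) (hf' : HasDerivAt f' f'' x₀) (hf'' : f'' < 0)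
    (hd : f' x₀ = 0) (hx₀ : f x₀ = 0) : ∀ᶠ x in 𝓝[>] x₀, f x < 0 := by
  have hsign := eventually_nhdsWithin_sign_eq_of_deriv_neg (hf'.deriv ▸ hf'') hd
  obtain ⟨l, u, ⟨hl, hu⟩, hsub⟩ := (hf.and hsign).exists_Ioo_subset
  filter_upwards [Ioo_mem_nhdsGT hu] with x hx
  have hIcc : Icc x₀ x ⊆ Ioo l u := Icc_subset_Ioo hl hx.2
  obtain ⟨ξ, hξ, hslope⟩ := exists_hasDerivAt_eq_slope f f' hx.1
    (fun y hy => (hsub (hIcc hy)).1.continuousAt.continuousWithinAt)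
    (fun y hy => (hsub (hIcc (Ioo_subset_Icc_self hy))).1)
  have hξneg : f' ξ < 0 := by
    have := (hsub (hIcc (Ioo_subset_Icc_self hξ))).2
    rwa [sign_neg (sub_neg.mpr hξ.1), sign_eq_neg_one_iff] at this
  rw [hx₀, sub_zero, eq_div_iff (sub_pos.mpr hx.1).ne'] at hslope
  nlinarith [hx.1]

theorem exists_isMinOn_Ioi_of_tendsto {f : ℝ → ℝ} {a L x₀ : ℝ} (hf : ContinuousOn f (Ioi a))
    (ha : Tendsto f (𝓝[>] a) (𝓝 L)) (htop : Tendsto f atTop atTop) (hx₀ : a < x₀)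
    (hlt : f x₀ < L) : ∃ x, a < x ∧ IsMinOn f (Ioi a) x := by
  obtain ⟨u, hau, hu⟩ := mem_nhdsGT_iff_exists_Ioc_subset.mp (ha.eventually_const_lt hlt)
  obtain ⟨M, hM⟩ := eventually_atTop.mp (htop.eventually_gt_atTop (f x₀))
  set K := Icc (min u x₀) (max M x₀)
  have hx₀K : x₀ ∈ K := ⟨min_le_right _ _, le_max_right _ _⟩
  have hKa : ∀ t ∈ K, a < t := fun t ht => (lt_min hau hx₀).trans_le ht.1
  obtain ⟨x, hxK, hmin⟩ := isCompact_Icc.exists_isMinOn ⟨x₀, hx₀K⟩ (hf.mono hKa)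
  refine ⟨x, hKa x hxK, fun t (ht : a < t) => ?_⟩
  have hxx₀ : f x ≤ f x₀ := hmin hx₀K
  by_cases htK : t ∈ K
  · exact hmin htK
  rcases not_and_or.mp htK with ht' | ht'
  · exact hxx₀.trans (hu ⟨ht, (le_of_not_ge ht').trans (min_le_left _ _)⟩).le
  · exact hxx₀.trans (hM t ((le_max_left _ _).trans (le_of_not_ge ht'))).le

theorem hasDerivAt_one_add_rpow_s9 (p : ℝ) {t : ℝ} (ht : 0 < 1 + t) :
    HasDerivAt (fun s : ℝ => (1 + s) ^ p) (p * (1 + t) ^ (p - 1)) t := by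
  simpa using ((hasDerivAt_id t).const_add 1).rpow_const (p := p) (Or.inl ht.ne')

namespace RpowQuotient

noncomputable def g (b c t : ℝ) : ℝ := ((1 + t) ^ (1 / b) - 1) * (1 + t) ^ c / t

noncomputable def φ (b c t : ℝ) : ℝ := b * (1 + t) ^ (c + 1 / b) - b * (1 + t) ^ c - t

noncomputable def φ' (b c t : ℝ) : ℝ :=
  b * (c + 1 / b) * (1 + t) ^ (c + 1 / b - 1) - b * c * (1 + t) ^ (c - 1) - 1

variable {b c : ℝ}

theorem g_sub_inv_eq (hb : b ≠ 0) {t : ℝ} (ht : 0 < t) :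
    g b c t - 1 / b = φ b c t / (b * t) := by
  have hpow : (1 + t) ^ (c + 1 / b) = (1 + t) ^ (1 / b) * (1 + t) ^ c := by
    rw [rpow_add (by linarith), mul_comm]
  rw [g, φ, hpow]
  field_simp

theorem g_pos (hb : 0 < b) {t : ℝ} (ht : 0 < t) : 0 < g b c t := by
  have h1 : 1 < (1 + t) ^ (1 / b) := one_lt_rpow (by linarith) (by positivity)
  exact div_pos (mul_pos (by linarith) (rpow_pos_of_pos (by linarith) c)) ht

theorem continuousOn_g : ContinuousOn (g b c) (Ioi 0) := by
  intro t (ht : 0 < t)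
  have h1t : 1 + t ≠ 0 := by linarith
  apply ContinuousAt.continuousWithinAt
  unfold g
  fun_prop (disch := simp [h1t, ht.ne'])

theorem hasDerivAt_φ {t : ℝ} (ht : 0 < 1 + t) : HasDerivAt (φ b c) (φ' b c t) t := by
  refine ((((hasDerivAt_one_add_rpow_s9 (c + 1 / b) ht).const_mul b).sub
    ((hasDerivAt_one_add_rpow_s9 c ht).const_mul b)).sub (hasDerivAt_id t)).congr_deriv ?_
  simp only [φ']
  ring

theorem hasDerivAt_φ'_zero (hb : b ≠ 0) : HasDerivAt (φ' b c) (2 * c + 1 / b - 1) 0 := by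
  refine ((((hasDerivAt_one_add_rpow_s9 (c + 1 / b - 1) (t := 0) (by norm_num)).const_mul
    (b * (c + 1 / b))).sub ((hasDerivAt_one_add_rpow_s9 (c - 1) (t := 0) (by norm_num)).const_mul
    (b * c))).sub_const 1).congr_deriv ?_
  simp only [add_zero, one_rpow]
  field_simp
  ring

theorem φ_zero : φ b c 0 = 0 := by simp [φ]

theorem φ'_zero (hb : b ≠ 0) : φ' b c 0 = 0 := by
  simp only [φ', add_zero, one_rpow]
  field_simp
  ring

theorem tendsto_g_nhdsGT_zero : Tendsto (g b c) (𝓝[>] 0) (𝓝 (1 / b)) := by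
  have hslope :=
    (hasDerivAt_one_add_rpow_s9 (1 / b) (t := 0) (by norm_num)).tendsto_slope_zero_right
  have hc : Tendsto (fun t : ℝ => (1 + t) ^ c) (𝓝[>] 0) (𝓝 1) := by
    have : ContinuousAt (fun t : ℝ => (1 + t) ^ c) 0 := by fun_prop (disch := norm_num)
    simpa using this.tendsto.mono_left nhdsWithin_le_nhds
  have := hslope.mul hc
  simp only [add_zero, one_rpow, mul_one, zero_add, smul_eq_mul] at this
  refine this.congr fun t => ?_
  simp only [g]
  ring

theorem tendsto_g_atTop (hb : 0 < b) (hc : 1 < c + 1 / b) : Tendsto (g b c) atTop atTop := by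
  have hs : Tendsto (fun t : ℝ => 1 + t) atTop atTop := tendsto_atTop_add_const_left _ 1 tendsto_id
  have hlow : Tendsto (fun t : ℝ => (1 + t) ^ (c + 1 / b - 1) / 2) atTop atTop :=
    ((tendsto_rpow_atTop (by linarith)).comp hs).atTop_div_const two_pos
  refine tendsto_atTop_mono' atTop ?_ hlow
  filter_upwards [((tendsto_rpow_atTop (by positivity : 0 < 1 / b)).comp hs).eventually_ge_atTop 2,
    eventually_gt_atTop 0] with t (h2 : 2 ≤ (1 + t) ^ (1 / b)) ht
  have h1t : 0 < 1 + t := by linarith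
  calc (1 + t) ^ (c + 1 / b - 1) / 2 = (1 + t) ^ (1 / b) / 2 * (1 + t) ^ c / (1 + t) := by
        rw [rpow_sub_one h1t.ne', add_comm c, rpow_add h1t]; ring
    _ ≤ g b c t := by
        unfold g
        have : 0 ≤ ((1 + t) ^ (1 / b) - 1) * (1 + t) ^ c := by
          have := rpow_pos_of_pos h1t c
          nlinarith
        gcongr ?_ * _ / ?_ <;> linarith

theorem eventually_g_lt_inv (hb : 0 < b) (hc : 2 * c + 1 / b < 1) :
    ∀ᶠ t in 𝓝[>] 0, g b c t < 1 / b := by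
  have hφ : ∀ᶠ t in 𝓝[>] 0, φ b c t < 0 :=
    eventually_nhdsGT_neg_of_second_deriv_neg
      ((eventually_gt_nhds (by norm_num : (-1 : ℝ) < 0)).mono fun t ht => hasDerivAt_φ (by linarith))
      (hasDerivAt_φ'_zero hb.ne') (by linarith) (φ'_zero hb.ne') φ_zero
  filter_upwards [hφ, self_mem_nhdsWithin] with t hφt (ht : 0 < t)
  rw [← sub_neg, g_sub_inv_eq hb.ne' ht]
  exact div_neg_of_neg_of_pos hφt (by positivity)

theorem exists_isMinOn_g_lt_inv (hb : 0 < b) (hc₁ : 1 < c + 1 / b) (hc₂ : 2 * c + 1 / b < 1) :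
    ∃ t₃, 0 < t₃ ∧ IsMinOn (g b c) (Ioi 0) t₃ ∧ g b c t₃ < 1 / b := by
  obtain ⟨t₀, hlt, ht₀ : 0 < t₀⟩ := ((eventually_g_lt_inv hb hc₂).and self_mem_nhdsWithin).exists
  obtain ⟨t₃, ht₃, hmin⟩ := exists_isMinOn_Ioi_of_tendsto continuousOn_g tendsto_g_nhdsGT_zero
    (tendsto_g_atTop hb hc₁) ht₀ hlt
  exact ⟨t₃, ht₃, hmin, (hmin ht₀).trans_lt hlt⟩

end RpowQuotient

theorem g_attains_inf_below_inv_b_general (N : ℕ) (hN : 2 ≤ N) (q b : ℝ)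
    (hq2 : q < (N : ℝ) / ((N : ℝ) - 1))
    (hb0 : 0 < b) (hb : b < (q-1)*((N:ℝ)-1) - ((N:ℝ) - ((N:ℝ)-1)*q)) :
    ∃ t₃ : ℝ, 0 < t₃ ∧
      (∀ t : ℝ, 0 < t →
        ((1+t₃) ^ (1/b) - 1) * (1+t₃) ^ (1 - (q-1)*((N:ℝ)-1)/b) / t₃ ≤
          ((1+t) ^ (1/b) - 1) * (1+t) ^ (1 - (q-1)*((N:ℝ)-1)/b) / t) ∧
      ((1+t₃) ^ (1/b) - 1) * (1+t₃) ^ (1 - (q-1)*((N:ℝ)-1)/b) / t₃ < 1/b ∧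
      0 < sInf { r | ∃ t : ℝ, 0 < t ∧
          r = ((1+t) ^ (1/b) - 1) * (1+t) ^ (1 - (q-1)*((N:ℝ)-1)/b) / t } ∧
      sInf { r | ∃ t : ℝ, 0 < t ∧
          r = ((1+t) ^ (1/b) - 1) * (1+t) ^ (1 - (q-1)*((N:ℝ)-1)/b) / t } < 1/b := by
  set c := 1 - (q-1)*((N:ℝ)-1)/b
  have hN₁ : (0:ℝ) < N - 1 := by
    have : (2:ℝ) ≤ N := by exact_mod_cast hN
    linarith
  have hX : (q-1)*((N:ℝ)-1) < 1 := by
    rw [lt_div_iff₀ hN₁] at hq2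
    linarith
  have hc₁ : 1 < c + 1/b := by
    have : c + 1/b = 1 + (1 - (q-1)*((N:ℝ)-1))/b := by ring
    linarith [div_pos (sub_pos.mpr hX) hb0]
  have hc₂ : 2*c + 1/b < 1 := by
    have : 2*c + 1/b = 2 - (2*((q-1)*((N:ℝ)-1)) - 1)/b := by ring
    linarith [(lt_div_iff₀ hb0).mpr (by linarith : 1 * b < 2*((q-1)*((N:ℝ)-1)) - 1)]
  obtain ⟨t₃, ht₃, hmin, hlt⟩ := RpowQuotient.exists_isMinOn_g_lt_inv hb0 hc₁ hc₂
  have hleast : IsLeast {r | ∃ t : ℝ, 0 < t ∧ r = RpowQuotient.g b c t}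
      (RpowQuotient.g b c t₃) :=
    ⟨⟨t₃, ht₃, rfl⟩, by rintro _ ⟨t, ht, rfl⟩; exact hmin ht⟩
  unfold RpowQuotient.g at hleast
  refine ⟨t₃, ht₃, fun t ht => hmin ht, hlt, ?_, ?_⟩ <;> rw [hleast.csInf_eq]
  exacts [RpowQuotient.g_pos hb0 ht₃, hlt]

/-- in the case `a = N(q-1)`, `(2N-1)/(2(N-1)) < q < N/(N-1)`,
`0 < b < b₀`, the function `g` attains its infimum at some `t₃ > 0` with
`g(t₃) < 1/b`, so `0 < inf g < 1/b`. -/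
theorem g_attains_inf_below_inv_b (N : ℕ) (hN : 2 ≤ N) (q b : ℝ)
    (hq1 : (2*(N:ℝ)-1) / (2*((N:ℝ)-1)) < q) (hq2 : q < (N : ℝ) / ((N : ℝ) - 1))
    (hb0 : 0 < b) (hb : b < (q-1)*((N:ℝ)-1) - ((N:ℝ) - ((N:ℝ)-1)*q)) :
    ∃ t₃ : ℝ, 0 < t₃ ∧
      (∀ t : ℝ, 0 < t →
        ((1+t₃) ^ (1/b) - 1) * (1+t₃) ^ (1 - (q-1)*((N:ℝ)-1)/b) / t₃ ≤
          ((1+t) ^ (1/b) - 1) * (1+t) ^ (1 - (q-1)*((N:ℝ)-1)/b) / t) ∧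
      ((1+t₃) ^ (1/b) - 1) * (1+t₃) ^ (1 - (q-1)*((N:ℝ)-1)/b) / t₃ < 1/b ∧
      0 < sInf { r | ∃ t : ℝ, 0 < t ∧
          r = ((1+t) ^ (1/b) - 1) * (1+t) ^ (1 - (q-1)*((N:ℝ)-1)/b) / t } ∧
      sInf { r | ∃ t : ℝ, 0 < t ∧
          r = ((1+t) ^ (1/b) - 1) * (1+t) ^ (1 - (q-1)*((N:ℝ)-1)/b) / t } < 1/b :=
  g_attains_inf_below_inv_b_general N hN q b hq2 hb0 hb
end

section
/- Let N ≥ 2, 1* := N/(N-1), a > 1*, b > 0, and h(t) := (1+t)^{1*/a - 1/b} / ((1+t)^{1*/a} - t^{1*/a}) for t > 0. Then: if b > 1, sup_{t>0} h(t) = ∞; if b = 1, h is strictly increasing on (0,∞) with h(t) → 1 as t → 0⁺ and h(t) → a/1* as t → ∞, so sup_{t>0} h(t) = a/1* and is not attained; if b < 1, h attains its supremum at a unique interior point t₁ > 0 with 1 < h(t₁) < ∞. -/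
open Real Filter Topology Set

/-- The auxiliary function `h` of the critical case. -/
noncomputable def hFun (os a b t : ℝ) : ℝ :=
  (1+t) ^ (os/a - 1/b) / ((1+t) ^ (os/a) - t ^ (os/a))

/-!
With `c = 1*/a ∈ (0,1)`, `β = 1/b` and `s = t/(1+t)`, one has `h(t) = (1+t)^(1-β) / σ(s)`, where
`σ(s) = (1 - s^c)/(1 - s)` is the slope of the chord of the concave function `x^c` between `s`
and `1`. Strict concavity makes `σ` strictly decreasing on `[0,1)`, from `σ(0) = 1` down to the
derivative `c` of `x^c` at `1`. Hence for `β < 1`, `h(t) > (1+t)^(1-β) → ∞`; for `β = 1`,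
`h = 1/σ` increases strictly from `1` to `1/c`. For `β > 1`, `h(0) = 1`, `h > 1` near `0`
(there `t^c` beats `β t`), and `h ≤ (1+t)^(1-β)/c → 0`, so `h` attains its maximum. At an
interior critical point, `h' = 0` reads `β((1+t)^c - t^c) = c t^(c-1)`, i.e. the chord slope of
`x^c` between `1` and `1 + 1/t` equals `c/β`. That slope is strictly monotone in `t`, so the
critical point is unique.
-/

section SlopeRpow

variable {c : ℝ}

lemma strictAntiOn_slope_rpow_one (hc0 : 0 < c) (hc1 : c < 1) :
    StrictAntiOn (slope (fun x : ℝ => x ^ c) 1) (Ici 0 \ {1}) := fun x hx y hy hxy => by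
  simpa only [slope_def_field] using (strictConcaveOn_rpow hc0 hc1).secant_strict_mono
    (mem_Ici.2 zero_le_one) hx.1 hy.1 hx.2 hy.2 hxy

lemma slope_rpow_one_zero (hc0 : 0 < c) : slope (fun x : ℝ => x ^ c) 1 0 = 1 := by
  simp [slope_def_field, zero_rpow hc0.ne']

lemma lt_slope_rpow_one (hc0 : 0 < c) (hc1 : c < 1) {s : ℝ} (hs0 : 0 ≤ s) (hs1 : s < 1) :
    c < slope (fun x : ℝ => x ^ c) 1 s := by
  have h := rpow_one_add_lt_one_add_mul_self (s := s - 1) (by linarith) (by linarith) hc0 hc1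
  rw [add_sub_cancel] at h
  rw [slope_def_field, one_rpow, lt_div_iff_of_neg (by linarith)]
  linarith

lemma tendsto_slope_rpow_one_nhdsLT (c : ℝ) :
    Tendsto (slope (fun x : ℝ => x ^ c) 1) (𝓝[<] 1) (𝓝 c) := by
  simpa using (hasDerivAt_rpow_const (p := c) (Or.inl one_ne_zero)).tendsto_slope.mono_left
    (nhdsLT_le_nhdsNE 1)

end SlopeRpow

lemma one_sub_mul_le_one_add_rpow_neg {β t : ℝ} (hβ : 0 ≤ β) (ht : 0 ≤ t) :
    1 - β * t ≤ (1 + t) ^ (-β) := by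
  have hlog : log (1 + t) ≤ t := by linarith [log_le_sub_one_of_pos (by linarith : 0 < 1 + t)]
  rw [rpow_def_of_pos (by linarith)]
  nlinarith [add_one_le_exp (log (1 + t) * -β)]

lemma strictMonoOn_div_one_add : StrictMonoOn (fun t : ℝ => t / (1 + t)) (Ici 0) :=
  fun x hx y hy hxy => by
    have hx : (0 : ℝ) ≤ x := hx
    rw [div_lt_div_iff₀ (by linarith) (by linarith)]
    linarith

lemma div_one_add_mem_Ico {t : ℝ} (ht : 0 ≤ t) : t / (1 + t) ∈ Ico 0 1 :=
  ⟨by positivity, (div_lt_one (by linarith)).2 (by linarith)⟩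

lemma tendsto_div_one_add_atTop : Tendsto (fun t : ℝ => t / (1 + t)) atTop (𝓝[<] 1) := by
  refine tendsto_nhdsWithin_iff.2 ⟨?_, ?_⟩
  · have h : Tendsto (fun t : ℝ => 1 - (1 + t)⁻¹) atTop (𝓝 (1 - 0)) :=
      tendsto_const_nhds.sub (tendsto_atTop_add_const_left _ 1 tendsto_id).inv_tendsto_atTop
    rw [sub_zero] at h
    refine h.congr' ?_
    filter_upwards [eventually_gt_atTop 0] with t ht
    field_simp
    ring
  · filter_upwards [eventually_ge_atTop 0] with t ht
    exact (div_one_add_mem_Ico ht).2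

lemma exists_isMaxOn_Ici_of_tendsto_atTop {f : ℝ → ℝ} {a l x₀ : ℝ} (hf : ContinuousOn f (Ici a))
    (hlim : Tendsto f atTop (𝓝 l)) (hx₀ : a ≤ x₀) (hl : l < f x₀) :
    ∃ x, a ≤ x ∧ IsMaxOn f (Ici a) x := by
  refine hf.exists_isMaxOn' isClosed_Ici hx₀ ?_
  rw [cocompact_eq_atBot_atTop, inf_sup_right, (disjoint_atBot_principal_Ici a).eq_bot, bot_sup_eq]
  exact (hlim.eventually (ge_mem_nhds hl)).filter_mono inf_le_left

/-- `hFun os a b = hRatio (os / a) (1 / b)` by definition. -/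
noncomputable def hRatio (c β t : ℝ) : ℝ := (1 + t) ^ (c - β) / ((1 + t) ^ c - t ^ c)

section hRatio

variable {c β t : ℝ}

lemma rpow_one_add_sub_rpow_pos (hc0 : 0 < c) (ht : 0 ≤ t) : 0 < (1 + t) ^ c - t ^ c :=
  sub_pos.2 (rpow_lt_rpow ht (by linarith) hc0)

lemma hRatio_zero (hc0 : 0 < c) : hRatio c β 0 = 1 := by
  simp [hRatio, zero_rpow hc0.ne']

lemma continuousAt_hRatio (hc0 : 0 < c) (ht : 0 ≤ t) : ContinuousAt (hRatio c β) t := by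
  have h1t : 1 + t ≠ 0 := by linarith
  refine ContinuousAt.div ?_ ?_ (rpow_one_add_sub_rpow_pos hc0 ht).ne'
  · exact (continuousAt_const.add continuousAt_id).rpow_const (Or.inl h1t)
  · exact ((continuousAt_const.add continuousAt_id).rpow_const (Or.inl h1t)).sub
      (continuousAt_id.rpow_const (Or.inr hc0.le))

lemma tendsto_hRatio_nhdsGT_zero (hc0 : 0 < c) : Tendsto (hRatio c β) (𝓝[>] 0) (𝓝 1) := by
  simpa only [hRatio_zero hc0] using (continuousAt_hRatio (β := β) hc0 le_rfl).tendsto.mono_left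
    nhdsWithin_le_nhds

lemma hRatio_eq_div_slope (ht : 0 < t) :
    hRatio c β t = (1 + t) ^ (1 - β) / slope (fun x : ℝ => x ^ c) 1 (t / (1 + t)) := by
  have h1t : 0 < 1 + t := by linarith
  rw [hRatio, slope_def_field, one_rpow, div_rpow ht.le h1t.le, rpow_sub h1t, rpow_sub h1t,
    rpow_one]
  have hXβ : 0 < (1 + t) ^ β := rpow_pos_of_pos h1t β
  have hXc : 0 < (1 + t) ^ c := rpow_pos_of_pos h1t c
  field_simp
  rw [show t - (1 + t) = -1 by ring, ← neg_sub, div_neg, neg_div]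

lemma rpow_lt_hRatio (hc0 : 0 < c) (hc1 : c < 1) (ht : 0 < t) :
    (1 + t) ^ (1 - β) < hRatio c β t := by
  obtain ⟨hs0, hs1⟩ := div_one_add_mem_Ico ht.le
  have hslope : slope (fun x : ℝ => x ^ c) 1 (t / (1 + t)) < 1 := by
    simpa only [slope_rpow_one_zero hc0] using strictAntiOn_slope_rpow_one hc0 hc1
      ⟨self_mem_Ici, zero_ne_one⟩ ⟨hs0, hs1.ne⟩ (div_pos ht (by linarith))
  rw [hRatio_eq_div_slope ht, lt_div_iff₀ (hc0.trans (lt_slope_rpow_one hc0 hc1 hs0 hs1))]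
  exact mul_lt_of_lt_one_right (rpow_pos_of_pos (by linarith) _) hslope

lemma hRatio_le_div (hc0 : 0 < c) (hc1 : c < 1) (ht : 0 < t) :
    hRatio c β t ≤ (1 + t) ^ (1 - β) / c := by
  obtain ⟨hs0, hs1⟩ := div_one_add_mem_Ico ht.le
  rw [hRatio_eq_div_slope ht]
  exact div_le_div_of_nonneg_left (rpow_pos_of_pos (by linarith) _).le hc0
    (lt_slope_rpow_one hc0 hc1 hs0 hs1).le

end hRatio

section hRatioOne

variable {c : ℝ}

lemma hRatio_one_eq_inv_slope {t : ℝ} (ht : 0 < t) :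
    hRatio c 1 t = (slope (fun x : ℝ => x ^ c) 1 (t / (1 + t)))⁻¹ := by
  rw [hRatio_eq_div_slope ht, sub_self, rpow_zero, one_div]

lemma strictMonoOn_hRatio_one (hc0 : 0 < c) (hc1 : c < 1) :
    StrictMonoOn (hRatio c 1) (Ioi 0) := fun x hx y hy hxy => by
  obtain ⟨hy0, hy1⟩ := div_one_add_mem_Ico (le_of_lt hy)
  obtain ⟨hx0, hx1⟩ := div_one_add_mem_Ico (le_of_lt hx)
  rw [hRatio_one_eq_inv_slope hx, hRatio_one_eq_inv_slope hy]
  exact inv_strictAnti₀ (hc0.trans (lt_slope_rpow_one hc0 hc1 hy0 hy1))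
    (strictAntiOn_slope_rpow_one hc0 hc1 ⟨hx0, hx1.ne⟩ ⟨hy0, hy1.ne⟩
      (strictMonoOn_div_one_add (Ioi_subset_Ici_self hx) (Ioi_subset_Ici_self hy) hxy))

lemma hRatio_one_lt_inv (hc0 : 0 < c) (hc1 : c < 1) {t : ℝ} (ht : 0 < t) :
    hRatio c 1 t < c⁻¹ := by
  obtain ⟨hs0, hs1⟩ := div_one_add_mem_Ico ht.le
  rw [hRatio_one_eq_inv_slope ht]
  exact inv_strictAnti₀ hc0 (lt_slope_rpow_one hc0 hc1 hs0 hs1)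

lemma tendsto_hRatio_one_atTop (hc0 : 0 < c) : Tendsto (hRatio c 1) atTop (𝓝 c⁻¹) := by
  refine (((tendsto_slope_rpow_one_nhdsLT c).comp tendsto_div_one_add_atTop).inv₀
    hc0.ne').congr' ?_
  filter_upwards [eventually_gt_atTop 0] with t ht
  exact (hRatio_one_eq_inv_slope ht).symm

lemma isLUB_hRatio_one (hc0 : 0 < c) (hc1 : c < 1) : IsLUB (hRatio c 1 '' Ioi 0) c⁻¹ := by
  refine ⟨?_, fun M hM => ?_⟩
  · rintro _ ⟨t, ht, rfl⟩
    exact (hRatio_one_lt_inv hc0 hc1 ht).le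
  · refine le_of_tendsto (tendsto_hRatio_one_atTop hc0) ?_
    filter_upwards [eventually_gt_atTop 0] with t ht
    exact hM (mem_image_of_mem _ ht)

end hRatioOne

section hRatioNeOne

variable {c β : ℝ}

lemma tendsto_hRatio_atTop_atTop (hc0 : 0 < c) (hc1 : c < 1) (hβ : β < 1) :
    Tendsto (hRatio c β) atTop atTop := by
  refine tendsto_atTop_mono' _ ?_
    ((tendsto_rpow_atTop (sub_pos.2 hβ)).comp (tendsto_atTop_add_const_left _ 1 tendsto_id))
  filter_upwards [eventually_gt_atTop 0] with t ht
  exact (rpow_lt_hRatio hc0 hc1 ht).le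

lemma not_bddAbove_hRatio (hc0 : 0 < c) (hc1 : c < 1) (hβ : β < 1) :
    ¬ BddAbove (hRatio c β '' Ioi 0) := by
  rintro ⟨M, hM⟩
  obtain ⟨t, ht, hMt⟩ := ((eventually_gt_atTop 0).and
    ((tendsto_hRatio_atTop_atTop hc0 hc1 hβ).eventually_gt_atTop M)).exists
  exact (hM (mem_image_of_mem _ ht)).not_gt hMt

lemma tendsto_hRatio_atTop_zero (hc0 : 0 < c) (hc1 : c < 1) (hβ : 1 < β) :
    Tendsto (hRatio c β) atTop (𝓝 0) := by
  have hbound : Tendsto (fun t : ℝ => (1 + t) ^ (1 - β) / c) atTop (𝓝 0) := by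
    rw [← zero_div c, ← neg_sub β 1]
    exact ((tendsto_rpow_neg_atTop (sub_pos.2 hβ)).comp
      (tendsto_atTop_add_const_left _ 1 tendsto_id)).div_const c
  refine tendsto_of_tendsto_of_tendsto_of_le_of_le' tendsto_const_nhds hbound ?_ ?_
  · filter_upwards [eventually_gt_atTop 0] with t ht
    exact div_nonneg (rpow_pos_of_pos (by linarith) _).le
      (rpow_one_add_sub_rpow_pos hc0 ht.le).le
  · filter_upwards [eventually_gt_atTop 0] with t ht
    exact hRatio_le_div hc0 hc1 ht

lemma exists_one_lt_hRatio (hc0 : 0 < c) (hc1 : c < 1) (hβ : 0 ≤ β) :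
    ∃ t, 0 < t ∧ 1 < hRatio c β t := by
  have hcont : ContinuousAt (fun t : ℝ => β * t ^ (1 - c) * (1 + t) ^ c) 0 := by
    fun_prop (disch := first | exact Or.inr (sub_pos.2 hc1).le | exact Or.inr hc0.le)
  have hsmall : ∀ᶠ t in 𝓝[>] 0, β * t ^ (1 - c) * (1 + t) ^ c < 1 :=
    (hcont.tendsto.eventually_lt_const (by simp [zero_rpow (sub_pos.2 hc1).ne'])).filter_mono
      nhdsWithin_le_nhds
  obtain ⟨t, hβt, ht⟩ := (hsmall.and self_mem_nhdsWithin).exists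
  have h1t : 0 < 1 + t := by linarith
  have hX : 0 < (1 + t) ^ c := rpow_pos_of_pos h1t c
  have htc : t ^ (1 - c) * t ^ c = t := by rw [← rpow_add ht, sub_add_cancel, rpow_one]
  have hkey : β * t * (1 + t) ^ c < t ^ c :=
    calc β * t * (1 + t) ^ c = β * (t ^ (1 - c) * t ^ c) * (1 + t) ^ c := by rw [htc]
      _ = β * t ^ (1 - c) * (1 + t) ^ c * t ^ c := by ring
      _ < 1 * t ^ c := mul_lt_mul_of_pos_right hβt (rpow_pos_of_pos ht c)
      _ = t ^ c := one_mul _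
  have hnum : (1 + t) ^ c * (1 - β * t) ≤ (1 + t) ^ (c - β) := by
    rw [sub_eq_add_neg c β, rpow_add h1t]
    exact mul_le_mul_of_nonneg_left (one_sub_mul_le_one_add_rpow_neg hβ ht.le) hX.le
  refine ⟨t, ht, ?_⟩
  rw [hRatio, one_lt_div (rpow_one_add_sub_rpow_pos hc0 ht.le)]
  nlinarith

lemma exists_isMaxOn_hRatio (hc0 : 0 < c) (hc1 : c < 1) (hβ : 1 < β) :
    ∃ t, 0 < t ∧ IsMaxOn (hRatio c β) (Ioi 0) t ∧ 1 < hRatio c β t := by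
  obtain ⟨t₀, ht₀, hgt⟩ := exists_one_lt_hRatio hc0 hc1 (zero_le_one.trans hβ.le)
  obtain ⟨t, ht, hmax⟩ := exists_isMaxOn_Ici_of_tendsto_atTop
    (fun x hx => (continuousAt_hRatio hc0 hx).continuousWithinAt)
    (tendsto_hRatio_atTop_zero hc0 hc1 hβ) ht₀.le (zero_lt_one.trans hgt)
  have hlt : 1 < hRatio c β t := hgt.trans_le (hmax ht₀.le)
  refine ⟨t, ht.lt_of_ne ?_, hmax.on_subset Ioi_subset_Ici_self, hlt⟩
  rintro rfl
  exact hlt.ne' (hRatio_zero hc0)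

lemma hasDerivAt_hRatio (hc0 : 0 < c) {t : ℝ} (ht : 0 < t) :
    HasDerivAt (hRatio c β) ((1 + t) ^ (c - β - 1) * (c * t ^ (c - 1) - β * ((1 + t) ^ c - t ^ c))
      / ((1 + t) ^ c - t ^ c) ^ 2) t := by
  have h1t : 0 < 1 + t := by linarith
  have hN := ((hasDerivAt_id t).const_add 1).rpow_const (p := c - β) (Or.inl h1t.ne')
  have hX := ((hasDerivAt_id t).const_add 1).rpow_const (p := c) (Or.inl h1t.ne')
  have hY := hasDerivAt_rpow_const (x := t) (p := c) (Or.inl ht.ne')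
  refine (hN.div (hX.sub hY) (rpow_one_add_sub_rpow_pos hc0 ht.le).ne').congr_deriv ?_
  have hN' : (1 + t) ^ (c - β) = (1 + t) ^ (c - β - 1) * (1 + t) := by
    rw [← rpow_add_one h1t.ne', sub_add_cancel]
  have hX' : (1 + t) ^ c = (1 + t) ^ (c - 1) * (1 + t) := by
    rw [← rpow_add_one h1t.ne', sub_add_cancel]
  have hY' : t ^ c = t ^ (c - 1) * t := by rw [← rpow_add_one ht.ne', sub_add_cancel]
  simp only [id, Pi.sub_apply]
  rw [hN', hX', hY']
  ring

lemma slope_rpow_one_add_inv_eq_of_isLocalMax (hc0 : 0 < c) (hβ : β ≠ 0) {t : ℝ} (ht : 0 < t)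
    (hmax : IsLocalMax (hRatio c β) t) : slope (fun x : ℝ => x ^ c) 1 (1 + t⁻¹) = c / β := by
  have h1t : 0 < 1 + t := by linarith
  have hD := rpow_one_add_sub_rpow_pos hc0 ht.le
  have hcrit : c * t ^ (c - 1) = β * ((1 + t) ^ c - t ^ c) := by
    have h0 := hmax.hasDerivAt_eq_zero (hasDerivAt_hRatio hc0 ht)
    rw [div_eq_zero_iff, mul_eq_zero, sub_eq_zero] at h0
    rcases h0 with (h0 | h0) | h0
    · exact absurd h0 (rpow_pos_of_pos h1t _).ne'
    · exact h0
    · exact absurd h0 (pow_pos hD 2).ne'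
  have hY' : t ^ c = t ^ (c - 1) * t := by rw [← rpow_add_one ht.ne', sub_add_cancel]
  have hx : 1 + t⁻¹ = (1 + t) / t := by field_simp; ring
  rw [slope_def_field, one_rpow, add_sub_cancel_left, hx, div_rpow h1t.le ht.le,
    div_eq_div_iff (inv_ne_zero ht.ne') hβ]
  field_simp
  linear_combination (-t) * hcrit - c * hY'

lemma eq_of_isLocalMax_hRatio (hc0 : 0 < c) (hc1 : c < 1) (hβ : β ≠ 0) {s t : ℝ} (hs : 0 < s)
    (ht : 0 < t) (hs_max : IsLocalMax (hRatio c β) s) (ht_max : IsLocalMax (hRatio c β) t) :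
    s = t := by
  have hmem : ∀ {x : ℝ}, 0 < x → 1 + x⁻¹ ∈ Ici 0 \ {1} := fun hx =>
    ⟨mem_Ici.2 (by positivity), by simpa using (inv_pos.2 hx).ne'⟩
  have h := (strictAntiOn_slope_rpow_one hc0 hc1).injOn (hmem hs) (hmem ht)
    ((slope_rpow_one_add_inv_eq_of_isLocalMax hc0 hβ hs hs_max).trans
      (slope_rpow_one_add_inv_eq_of_isLocalMax hc0 hβ ht ht_max).symm)
  simpa using h

end hRatioNeOne

/-- behavior of `sup_{t>0} h(t)` for `a > 1*` according to `b`. -/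
theorem sup_h_trichotomy (N : ℕ) (hN : 2 ≤ N) (a b : ℝ)
    (ha : (N : ℝ) / ((N : ℝ) - 1) < a) (hb : 0 < b) :
    (1 < b → ¬ BddAbove { r | ∃ t : ℝ, 0 < t ∧ r = hFun ((N:ℝ)/((N:ℝ)-1)) a b t }) ∧
    (b = 1 →
      StrictMonoOn (hFun ((N:ℝ)/((N:ℝ)-1)) a b) (Set.Ioi 0) ∧
      Tendsto (hFun ((N:ℝ)/((N:ℝ)-1)) a b) (nhdsWithin 0 (Set.Ioi 0)) (nhds 1) ∧
      Tendsto (hFun ((N:ℝ)/((N:ℝ)-1)) a b) atTop (nhds (a / ((N:ℝ)/((N:ℝ)-1)))) ∧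
      sSup { r | ∃ t : ℝ, 0 < t ∧ r = hFun ((N:ℝ)/((N:ℝ)-1)) a b t } =
        a / ((N:ℝ)/((N:ℝ)-1)) ∧
      ¬ ∃ t : ℝ, 0 < t ∧ hFun ((N:ℝ)/((N:ℝ)-1)) a b t =
          sSup { r | ∃ t : ℝ, 0 < t ∧ r = hFun ((N:ℝ)/((N:ℝ)-1)) a b t }) ∧
    (b < 1 → ∃ t₁ : ℝ, 0 < t₁ ∧
      (∀ t : ℝ, 0 < t → hFun ((N:ℝ)/((N:ℝ)-1)) a b t ≤ hFun ((N:ℝ)/((N:ℝ)-1)) a b t₁) ∧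
      1 < hFun ((N:ℝ)/((N:ℝ)-1)) a b t₁ ∧
      ∀ t : ℝ, 0 < t →
        (∀ s : ℝ, 0 < s → hFun ((N:ℝ)/((N:ℝ)-1)) a b s ≤ hFun ((N:ℝ)/((N:ℝ)-1)) a b t) →
        t = t₁) := by
  set os : ℝ := (N : ℝ) / ((N : ℝ) - 1)
  have hN2 : (2 : ℝ) ≤ N := by exact_mod_cast hN
  have hos : 0 < os := div_pos (by linarith) (by linarith)
  have hc0 : 0 < os / a := div_pos hos (hos.trans ha)
  have hc1 : os / a < 1 := (div_lt_one (hos.trans ha)).2 ha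
  have himage : ∀ f : ℝ → ℝ, {r | ∃ t : ℝ, 0 < t ∧ r = f t} = f '' Ioi 0 := fun f => by
    ext; simp [eq_comm]
  have hh : hFun os a b = hRatio (os / a) (1 / b) := rfl
  rw [hh]
  simp only [himage]
  refine ⟨fun hb1 => not_bddAbove_hRatio hc0 hc1 ((div_lt_one hb).2 hb1), fun hb1 => ?_,
    fun hb1 => ?_⟩
  · subst hb1
    rw [div_one, ← inv_div os a, (isLUB_hRatio_one hc0 hc1).csSup_eq (nonempty_Ioi.image _)]
    exact ⟨strictMonoOn_hRatio_one hc0 hc1, tendsto_hRatio_nhdsGT_zero hc0,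
      tendsto_hRatio_one_atTop hc0, rfl, fun ⟨t, ht, h⟩ => (hRatio_one_lt_inv hc0 hc1 ht).ne h⟩
  · obtain ⟨t₁, ht₁, hmax, hgt⟩ := exists_isMaxOn_hRatio hc0 hc1 ((one_lt_div hb).2 hb1)
    refine ⟨t₁, ht₁, fun t ht => hmax ht, hgt, fun t ht htmax => ?_⟩
    exact eq_of_isLocalMax_hRatio hc0 hc1 (one_div_ne_zero hb.ne') ht ht₁
      (IsMaxOn.isLocalMax htmax (Ioi_mem_nhds ht)) (hmax.isLocalMax (Ioi_mem_nhds ht₁))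
end

section
/- Let N ≥ 2, 1* := N/(N-1), a = 1*, 0 < b < 1, and g(t) := (1+t)(1 - (1+t)^{-1/b})/t for t > 0. Then g is strictly decreasing on (0,∞), with lim_{t→0⁺} g(t) = 1/b and lim_{t→∞} g(t) = 1; hence inf_{t>0} g(t) = 1 and it is not attained. Moreover h(t) := (1+t)^{1-1/b} satisfies sup_{t>0} h(t) = 1, also not attained. -/
open Real Filter Topology Set

/-!
With `p = 1/b > 1`, the derivative of `g(t) = (1+t)(1 - (1+t)^{-p})/t` is
`((1 + p t)(1+t)^{-p} - 1)/t²`, which is negative by the strict Bernoulli inequality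
`1 + p t < (1+t)^p`. Near `0`, `g` is `(1+t)` times a difference quotient of `u ↦ -u^{-p}` at `1`,
hence tends to `p`; at infinity it tends to `1`. Since `g(t) - 1 = (1 - (1+t)^{1-p})/t > 0`, the
infimum `1` is only approached as `t → ∞`; likewise `(1+t)^{1-p} < 1` tends to `1` only as `t → 0⁺`.
-/

lemma hasDerivAt_one_add_mul_one_sub_rpow_neg_div (p : ℝ) {t : ℝ} (h1t : 0 < 1 + t)
    (ht : t ≠ 0) :
    HasDerivAt (fun t : ℝ => (1 + t) * (1 - (1 + t) ^ (-p)) / t)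
      (((1 + p * t) * (1 + t) ^ (-p) - 1) / t ^ 2) t := by
  have hbase : HasDerivAt (fun t : ℝ => 1 + t) 1 t := (hasDerivAt_id t).const_add 1
  have hpow := hbase.rpow_const (p := -p) (Or.inl h1t.ne')
  refine ((hbase.mul ((hasDerivAt_const t 1).sub hpow)).div (hasDerivAt_id t) ht).congr_deriv ?_
  have hsplit : (1 + t) ^ (-p) = (1 + t) ^ (-p - 1) * (1 + t) := by
    rw [← rpow_add_one h1t.ne']; ring_nf
  simp only [Pi.mul_apply, Pi.sub_apply, id_eq]
  rw [hsplit]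
  field_simp
  ring

lemma one_add_mul_mul_rpow_neg_lt_one {p t : ℝ} (hp : 1 < p) (ht1 : -1 < t) (ht : t ≠ 0) :
    (1 + p * t) * (1 + t) ^ (-p) < 1 := by
  have h1t : 0 < 1 + t := by linarith
  calc (1 + p * t) * (1 + t) ^ (-p)
      < (1 + t) ^ p * (1 + t) ^ (-p) := by
        gcongr
        exact one_add_mul_self_lt_rpow_one_add ht1.le ht hp
    _ = 1 := by rw [← rpow_add h1t, add_neg_cancel, rpow_zero]

lemma strictAntiOn_one_add_mul_one_sub_rpow_neg_div {p : ℝ} (hp : 1 < p) :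
    StrictAntiOn (fun t : ℝ => (1 + t) * (1 - (1 + t) ^ (-p)) / t) (Ioi 0) := by
  have hderiv (t : ℝ) (ht : 0 < t) :=
    hasDerivAt_one_add_mul_one_sub_rpow_neg_div p (by linarith : 0 < 1 + t) ht.ne'
  refine strictAntiOn_of_hasDerivWithinAt_neg (convex_Ioi 0)
    (f' := fun t => ((1 + p * t) * (1 + t) ^ (-p) - 1) / t ^ 2)
    (fun t ht => (hderiv t ht).continuousAt.continuousWithinAt) (fun t ht => ?_) (fun t ht => ?_)
  all_goals rw [interior_Ioi, mem_Ioi] at ht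
  · exact (hderiv t ht).hasDerivWithinAt
  · have := one_add_mul_mul_rpow_neg_lt_one hp (by linarith : -1 < t) ht.ne'
    exact div_neg_of_neg_of_pos (by linarith) (by positivity)

lemma tendsto_one_add_mul_one_sub_rpow_neg_div_nhdsGT_zero (p : ℝ) :
    Tendsto (fun t : ℝ => (1 + t) * (1 - (1 + t) ^ (-p)) / t) (𝓝[>] 0) (𝓝 p) := by
  have hderiv : HasDerivAt (fun u : ℝ => -u ^ (-p)) p 1 := by
    simpa using ((hasDerivAt_id (1 : ℝ)).rpow_const (p := -p) (Or.inl one_ne_zero)).fun_neg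
  have hslope := (hasDerivAt_iff_tendsto_slope_zero.mp hderiv).mono_left
    (nhdsWithin_mono 0 fun t (ht : 0 < t) => ht.ne')
  have hbase : Tendsto (fun t : ℝ => 1 + t) (𝓝[>] 0) (𝓝 1) := by
    have : Tendsto (fun t : ℝ => 1 + t) (𝓝 0) (𝓝 (1 + 0)) := tendsto_id.const_add 1
    simpa using this.mono_left nhdsWithin_le_nhds
  convert hbase.mul hslope using 2 with t
  · simp only [smul_eq_mul, one_rpow]
    ring
  · ring

lemma tendsto_one_add_mul_one_sub_rpow_neg_div_atTop {p : ℝ} (hp : 0 < p) :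
    Tendsto (fun t : ℝ => (1 + t) * (1 - (1 + t) ^ (-p)) / t) atTop (𝓝 1) := by
  have hratio : Tendsto (fun t : ℝ => (1 + t) / t) atTop (𝓝 1) := by
    have := tendsto_inv_atTop_zero.const_add (1 : ℝ)
    rw [add_zero] at this
    refine this.congr' ?_
    filter_upwards [eventually_gt_atTop 0] with t ht
    field_simp
    ring
  have hdecay : Tendsto (fun t : ℝ => 1 - (1 + t) ^ (-p)) atTop (𝓝 1) := by
    simpa using ((tendsto_rpow_neg_atTop hp).comp
      (tendsto_atTop_add_const_left _ 1 tendsto_id)).const_sub (1 : ℝ)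
  simpa only [mul_one, mul_div_right_comm] using hratio.mul hdecay

lemma one_lt_one_add_mul_one_sub_rpow_neg_div {p t : ℝ} (hp : 1 < p) (ht : 0 < t) :
    1 < (1 + t) * (1 - (1 + t) ^ (-p)) / t := by
  have hsplit : (1 + t) ^ (1 - p) = (1 + t) * (1 + t) ^ (-p) := by
    rw [sub_eq_add_neg, rpow_add (by linarith), rpow_one]
  rw [lt_div_iff₀ ht, one_mul]
  nlinarith [rpow_lt_one_of_one_lt_of_neg (by linarith : 1 < 1 + t) (by linarith : 1 - p < 0)]

section Extremum

variable {α : Type*} {P : α → Prop} {f : α → ℝ} {l : Filter α} [l.NeBot] {c : ℝ}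

lemma sInf_eq_of_lt_of_tendsto (hP : ∀ᶠ t in l, P t) (hlt : ∀ t, P t → c < f t)
    (hf : Tendsto f l (𝓝 c)) : sInf {r | ∃ t, P t ∧ r = f t} = c := by
  refine IsGLB.csInf_eq ⟨?_, fun b hb => ?_⟩ ?_
  · rintro r ⟨t, ht, rfl⟩
    exact (hlt t ht).le
  · exact ge_of_tendsto hf (hP.mono fun t ht => hb ⟨t, ht, rfl⟩)
  · obtain ⟨t, ht⟩ := hP.exists
    exact ⟨f t, t, ht, rfl⟩

lemma sSup_eq_of_lt_of_tendsto (hP : ∀ᶠ t in l, P t) (hlt : ∀ t, P t → f t < c)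
    (hf : Tendsto f l (𝓝 c)) : sSup {r | ∃ t, P t ∧ r = f t} = c := by
  refine IsLUB.csSup_eq ⟨?_, fun b hb => ?_⟩ ?_
  · rintro r ⟨t, ht, rfl⟩
    exact (hlt t ht).le
  · exact le_of_tendsto hf (hP.mono fun t ht => hb ⟨t, ht, rfl⟩)
  · obtain ⟨t, ht⟩ := hP.exists
    exact ⟨f t, t, ht, rfl⟩

end Extremum

theorem g_strictAnti_a_eq_onestar_general (b : ℝ) (hb0 : 0 < b)
    (hb : b < 1) :
    StrictAntiOn (fun t : ℝ => (1+t) * (1 - (1+t) ^ (-(1/b))) / t) (Set.Ioi 0) ∧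
    Tendsto (fun t : ℝ => (1+t) * (1 - (1+t) ^ (-(1/b))) / t)
      (nhdsWithin 0 (Set.Ioi 0)) (nhds (1/b)) ∧
    Tendsto (fun t : ℝ => (1+t) * (1 - (1+t) ^ (-(1/b))) / t) atTop (nhds 1) ∧
    sInf { r | ∃ t : ℝ, 0 < t ∧ r = (1+t) * (1 - (1+t) ^ (-(1/b))) / t } = 1 ∧
    (¬ ∃ t : ℝ, 0 < t ∧ (1+t) * (1 - (1+t) ^ (-(1/b))) / t =
        sInf { r | ∃ t : ℝ, 0 < t ∧ r = (1+t) * (1 - (1+t) ^ (-(1/b))) / t }) ∧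
    sSup { r | ∃ t : ℝ, 0 < t ∧ r = (1+t) ^ (1 - 1/b) } = 1 ∧
    ¬ ∃ t : ℝ, 0 < t ∧ (1+t) ^ (1 - 1/b) =
        sSup { r | ∃ t : ℝ, 0 < t ∧ r = (1+t) ^ (1 - 1/b) } := by
  set p := 1 / b
  have hp : 1 < p := one_lt_one_div hb0 hb
  have hgt (t : ℝ) (ht : 0 < t) := one_lt_one_add_mul_one_sub_rpow_neg_div hp ht
  have hlt (t : ℝ) (ht : 0 < t) : (1 + t) ^ (1 - p) < 1 :=
    rpow_lt_one_of_one_lt_of_neg (by linarith) (by linarith)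
  have hatTop := tendsto_one_add_mul_one_sub_rpow_neg_div_atTop (by linarith : 0 < p)
  have hnhdsGT : Tendsto (fun t : ℝ => (1 + t) ^ (1 - p)) (𝓝[>] 0) (𝓝 1) := by
    simpa using ((continuousAt_const.add continuousAt_id).rpow_const (p := 1 - p)
      (Or.inl (by norm_num : (1 : ℝ) + 0 ≠ 0))).tendsto.mono_left nhdsWithin_le_nhds
  have hInf := sInf_eq_of_lt_of_tendsto (eventually_gt_atTop 0) hgt hatTop
  have hSup := sSup_eq_of_lt_of_tendsto (l := 𝓝[>] 0) self_mem_nhdsWithin hlt hnhdsGT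
  refine ⟨strictAntiOn_one_add_mul_one_sub_rpow_neg_div hp,
    tendsto_one_add_mul_one_sub_rpow_neg_div_nhdsGT_zero p, hatTop, hInf, ?_, hSup, ?_⟩
  · rintro ⟨t, ht, heq⟩
    exact (hgt t ht).ne' (heq.trans hInf)
  · rintro ⟨t, ht, heq⟩
    exact (hlt t ht).ne (heq.trans hSup)

/-- for `a = 1*`, `0 < b < 1`, `g` is strictly decreasing with
limits `1/b` at `0⁺` and `1` at `∞`, so `inf g = 1` is not attained; moreover
`h(t) = (1+t)^{1-1/b}` has supremum `1`, also not attained. -/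
theorem g_strictAnti_a_eq_onestar (N : ℕ) (hN : 2 ≤ N) (b : ℝ) (hb0 : 0 < b)
    (hb : b < 1) :
    StrictAntiOn (fun t : ℝ => (1+t) * (1 - (1+t) ^ (-(1/b))) / t) (Set.Ioi 0) ∧
    Tendsto (fun t : ℝ => (1+t) * (1 - (1+t) ^ (-(1/b))) / t)
      (nhdsWithin 0 (Set.Ioi 0)) (nhds (1/b)) ∧
    Tendsto (fun t : ℝ => (1+t) * (1 - (1+t) ^ (-(1/b))) / t) atTop (nhds 1) ∧
    sInf { r | ∃ t : ℝ, 0 < t ∧ r = (1+t) * (1 - (1+t) ^ (-(1/b))) / t } = 1 ∧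
    (¬ ∃ t : ℝ, 0 < t ∧ (1+t) * (1 - (1+t) ^ (-(1/b))) / t =
        sInf { r | ∃ t : ℝ, 0 < t ∧ r = (1+t) * (1 - (1+t) ^ (-(1/b))) / t }) ∧
    sSup { r | ∃ t : ℝ, 0 < t ∧ r = (1+t) ^ (1 - 1/b) } = 1 ∧
    ¬ ∃ t : ℝ, 0 < t ∧ (1+t) ^ (1 - 1/b) =
        sSup { r | ∃ t : ℝ, 0 < t ∧ r = (1+t) ^ (1 - 1/b) } :=
  g_strictAnti_a_eq_onestar_general b hb0 hb
end

section
/- Let N ≥ 2, 1* := N/(N-1), 0 < a < 1*, 0 < b ≤ 1. Then g(t) := ((1+t)^{1/b} - 1)(1+t)^{1*/a - 1/b} / t^{1*/a} is strictly decreasing on (0,∞) with limit 1 as t → ∞ (so inf g = 1, not attained), and h(t) := (1+t)^{1*/a - 1/b} / ((1+t)^{1*/a} - t^{1*/a}) is strictly decreasing on (0,∞) with h(t) → 1 as t → 0⁺ (so sup h = 1, not attained). -/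
open Real Filter Topology Set

/-! Put `p = 1/b ≥ 1`, `q = 1*/a > 1` and `x = 1/(1+t)`, which decreases from `1` to `0` on
`(0, ∞)`. Writing `S_r(x) = (1 - x^r)/(1 - x)` for the slope of the convex function `y ↦ y^r`
between `x` and `1`, which is nondecreasing in `x` (strictly if `r > 1`), one has
`g = S_p(x) / (1 - x)^(q-1)` and `h = x^(p-1) / S_q(1 - x)`. Both are therefore strictly
increasing in `x`, i.e. strictly decreasing in `t`; both are continuous at the relevant
endpoint (`x = 0` for `g`, `x = 1` for `h`) with value `1` there, and strict monotonicity
makes `1` the infimum of `g`, resp. the supremum of `h`, without being attained. -/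

theorem strictMonoOn_div_of_monotoneOn_of_strictAntiOn {α 𝕜 : Type*} [Preorder α] [Field 𝕜]
    [LinearOrder 𝕜] [IsStrictOrderedRing 𝕜] {s : Set α} {f g : α → 𝕜}
    (hf : MonotoneOn f s) (hf₀ : ∀ x ∈ s, 0 < f x) (hg : StrictAntiOn g s)
    (hg₀ : ∀ x ∈ s, 0 < g x) : StrictMonoOn (fun x => f x / g x) s := fun x hx y hy hxy =>
  calc f x / g x ≤ f y / g x := div_le_div_of_nonneg_right (hf hx hy hxy.le) (hg₀ x hx).le
    _ < f y / g y := div_lt_div_of_pos_left (hf₀ y hy) (hg₀ y hy) (hg hx hy hxy)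

noncomputable def rpowSecant (r x : ℝ) : ℝ := (1 - x ^ r) / (1 - x)

theorem rpowSecant_eq_slope (r x : ℝ) : rpowSecant r x = (x ^ r - 1 ^ r) / (x - 1) := by
  rw [rpowSecant, one_rpow, ← neg_div_neg_eq, neg_sub, neg_sub]

theorem rpowSecant_pos {r x : ℝ} (hr : 0 < r) (hx : x ∈ Ico 0 1) : 0 < rpowSecant r x :=
  div_pos (sub_pos.2 (rpow_lt_one hx.1 hx.2 hr)) (sub_pos.2 hx.2)

theorem monotoneOn_rpowSecant {r : ℝ} (hr : 1 ≤ r) : MonotoneOn (rpowSecant r) (Ico 0 1) := by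
  intro x hx y hy hxy
  simp only [rpowSecant_eq_slope]
  exact (convexOn_rpow hr).secant_mono (a := 1) (mem_Ici.2 zero_le_one) hx.1 hy.1 hx.2.ne
    hy.2.ne hxy

theorem strictMonoOn_rpowSecant {r : ℝ} (hr : 1 < r) :
    StrictMonoOn (rpowSecant r) (Ico 0 1) := by
  intro x hx y hy hxy
  simp only [rpowSecant_eq_slope]
  exact (strictConvexOn_rpow hr).secant_strict_mono (a := 1) (mem_Ici.2 zero_le_one) hx.1 hy.1
    hx.2.ne hy.2.ne hxy

theorem continuousAt_rpowSecant_zero {r : ℝ} (hr : 0 ≤ r) : ContinuousAt (rpowSecant r) 0 :=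
  (continuousAt_const.sub (continuousAt_id.rpow_const (Or.inr hr))).div
    (continuousAt_const.sub continuousAt_id) (by norm_num)

theorem rpowSecant_zero {r : ℝ} (hr : r ≠ 0) : rpowSecant r 0 = 1 := by
  simp [rpowSecant, zero_rpow hr]

section

variable {p q : ℝ}

theorem strictMonoOn_rpowSecant_div (hp : 1 ≤ p) (hq : 1 < q) :
    StrictMonoOn (fun x => rpowSecant p x / (1 - x) ^ (q - 1)) (Ioo 0 1) := by
  refine strictMonoOn_div_of_monotoneOn_of_strictAntiOn
    ((monotoneOn_rpowSecant hp).mono Ioo_subset_Ico_self)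
    (fun x hx => rpowSecant_pos (by linarith) (Ioo_subset_Ico_self hx)) ?_
    (fun x hx => rpow_pos_of_pos (sub_pos.2 hx.2) _)
  intro x hx y hy hxy
  exact rpow_lt_rpow (sub_pos.2 hy.2).le (by linarith) (by linarith)

theorem strictMonoOn_rpow_div_rpowSecant (hp : 1 ≤ p) (hq : 1 < q) :
    StrictMonoOn (fun x => x ^ (p - 1) / rpowSecant q (1 - x)) (Ioo 0 1) := by
  have hmaps : MapsTo (fun x : ℝ => 1 - x) (Ioo 0 1) (Ico 0 1) :=
    fun x hx => ⟨by linarith [hx.2], by linarith [hx.1]⟩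
  refine strictMonoOn_div_of_monotoneOn_of_strictAntiOn
    (fun x hx y _ hxy => rpow_le_rpow hx.1.le hxy (by linarith))
    (fun x hx => rpow_pos_of_pos hx.1 _) ?_
    (fun x hx => rpowSecant_pos (by linarith) (hmaps hx))
  exact (strictMonoOn_rpowSecant hq).comp_strictAntiOn
    (fun x _ y _ hxy => by simpa using hxy) hmaps

theorem tendsto_rpowSecant_div_zero (hp : 0 < p) (q : ℝ) :
    Tendsto (fun x => rpowSecant p x / (1 - x) ^ (q - 1)) (𝓝 0) (𝓝 1) := by
  have hc : ContinuousAt (fun x => rpowSecant p x / (1 - x) ^ (q - 1)) 0 :=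
    (continuousAt_rpowSecant_zero hp.le).div
      ((continuousAt_const.sub continuousAt_id).rpow_const (Or.inl (by norm_num))) (by norm_num)
  simpa [rpowSecant_zero hp.ne'] using hc.tendsto

theorem tendsto_rpow_div_rpowSecant_one (p : ℝ) (hq : 0 < q) :
    Tendsto (fun x => x ^ (p - 1) / rpowSecant q (1 - x)) (𝓝 1) (𝓝 1) := by
  have hs : ContinuousAt (fun x : ℝ => rpowSecant q (1 - x)) 1 :=
    (continuousAt_rpowSecant_zero hq.le).comp_of_eq (continuousAt_const.sub continuousAt_id)
      (sub_self 1)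
  have hc : ContinuousAt (fun x => x ^ (p - 1) / rpowSecant q (1 - x)) 1 :=
    (continuousAt_id.rpow_const (Or.inl one_ne_zero)).div hs (by simp [rpowSecant_zero hq.ne'])
  simpa [rpowSecant_zero hq.ne'] using hc.tendsto

end

section

variable {p q t : ℝ}

theorem g_eq_rpowSecant_div (ht : 0 < t) :
    ((1 + t) ^ p - 1) * (1 + t) ^ (q - p) / t ^ q =
      rpowSecant p (1 + t)⁻¹ / (1 - (1 + t)⁻¹) ^ (q - 1) := by
  have hu : 0 < 1 + t := by linarith
  have h1 : 1 - (1 + t)⁻¹ = t / (1 + t) := by field_simp; ring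
  rw [rpowSecant, h1, inv_rpow hu.le, div_rpow ht.le hu.le, rpow_sub_one ht.ne',
    rpow_sub_one hu.ne', rpow_sub hu]
  field_simp

theorem h_eq_rpow_div_rpowSecant (ht : 0 < t) :
    (1 + t) ^ (q - p) / ((1 + t) ^ q - t ^ q) =
      (1 + t)⁻¹ ^ (p - 1) / rpowSecant q (1 - (1 + t)⁻¹) := by
  have hu : 0 < 1 + t := by linarith
  have h1 : 1 - (1 + t)⁻¹ = t / (1 + t) := by field_simp; ring
  rw [rpowSecant, h1, inv_rpow hu.le, div_rpow ht.le hu.le, rpow_sub_one hu.ne', rpow_sub hu]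
  field_simp
  ring

end

theorem strictAntiOn_inv_one_add : StrictAntiOn (fun t : ℝ => (1 + t)⁻¹) (Ioi 0) :=
  fun x (hx : 0 < x) _ _ hxy => inv_strictAnti₀ (by linarith) (by linarith)

theorem mapsTo_inv_one_add : MapsTo (fun t : ℝ => (1 + t)⁻¹) (Ioi 0) (Ioo 0 1) :=
  fun t (ht : 0 < t) => ⟨by positivity, inv_lt_one_of_one_lt₀ (by linarith)⟩

theorem tendsto_inv_one_add_atTop : Tendsto (fun t : ℝ => (1 + t)⁻¹) atTop (𝓝 0) :=
  tendsto_inv_atTop_zero.comp (tendsto_atTop_add_const_left _ 1 tendsto_id)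

theorem tendsto_inv_one_add_nhdsGT_zero : Tendsto (fun t : ℝ => (1 + t)⁻¹) (𝓝[>] 0) (𝓝 1) := by
  have hc : ContinuousAt (fun t : ℝ => (1 + t)⁻¹) 0 :=
    (continuousAt_const.add continuousAt_id).inv₀ (by norm_num)
  simpa using hc.tendsto.mono_left nhdsWithin_le_nhds

section

variable {p q : ℝ}

theorem strictAntiOn_g (hp : 1 ≤ p) (hq : 1 < q) :
    StrictAntiOn (fun t : ℝ => ((1 + t) ^ p - 1) * (1 + t) ^ (q - p) / t ^ q) (Ioi 0) :=
  ((strictMonoOn_rpowSecant_div hp hq).comp_strictAntiOn strictAntiOn_inv_one_add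
    mapsTo_inv_one_add).congr fun _ ht => (g_eq_rpowSecant_div ht).symm

theorem tendsto_g_atTop (hp : 0 < p) (q : ℝ) :
    Tendsto (fun t : ℝ => ((1 + t) ^ p - 1) * (1 + t) ^ (q - p) / t ^ q) atTop (𝓝 1) := by
  refine ((tendsto_rpowSecant_div_zero hp q).comp tendsto_inv_one_add_atTop).congr' ?_
  filter_upwards [eventually_gt_atTop 0] with t ht using (g_eq_rpowSecant_div ht).symm

theorem strictAntiOn_h (hp : 1 ≤ p) (hq : 1 < q) :
    StrictAntiOn (fun t : ℝ => (1 + t) ^ (q - p) / ((1 + t) ^ q - t ^ q)) (Ioi 0) :=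
  ((strictMonoOn_rpow_div_rpowSecant hp hq).comp_strictAntiOn strictAntiOn_inv_one_add
    mapsTo_inv_one_add).congr fun _ ht => (h_eq_rpow_div_rpowSecant ht).symm

theorem tendsto_h_nhdsGT_zero (p : ℝ) (hq : 0 < q) :
    Tendsto (fun t : ℝ => (1 + t) ^ (q - p) / ((1 + t) ^ q - t ^ q)) (𝓝[>] 0) (𝓝 1) := by
  refine ((tendsto_rpow_div_rpowSecant_one p hq).comp
    tendsto_inv_one_add_nhdsGT_zero).congr' ?_
  filter_upwards [self_mem_nhdsWithin] with t ht using (h_eq_rpow_div_rpowSecant ht).symm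

end

section

variable {f : ℝ → ℝ} {c l : ℝ}

theorem StrictAntiOn.lt_of_tendsto_atTop (hf : StrictAntiOn f (Ioi c))
    (hl : Tendsto f atTop (𝓝 l)) {t : ℝ} (ht : c < t) : l < f t := by
  have hle : l ≤ f (t + 1) := le_of_tendsto hl <| by
    filter_upwards [eventually_gt_atTop (t + 1)] with s hs
    exact (hf (mem_Ioi.2 (by linarith)) (mem_Ioi.2 (by linarith)) hs).le
  exact hle.trans_lt (hf ht (mem_Ioi.2 (by linarith)) (lt_add_one t))

theorem StrictAntiOn.sInf_eq_of_tendsto_atTop (hf : StrictAntiOn f (Ioi c))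
    (hl : Tendsto f atTop (𝓝 l)) : sInf {r | ∃ t, c < t ∧ r = f t} = l := by
  refine csInf_eq_of_forall_ge_of_forall_gt_exists_lt ⟨_, c + 1, lt_add_one c, rfl⟩
    (fun _ ⟨t, ht, hr⟩ => hr ▸ (hf.lt_of_tendsto_atTop hl ht).le) fun w hw => ?_
  obtain ⟨t, hwt, hct⟩ := ((hl.eventually (gt_mem_nhds hw)).and (eventually_gt_atTop c)).exists
  exact ⟨f t, ⟨t, hct, rfl⟩, hwt⟩

theorem StrictAntiOn.lt_of_tendsto_nhdsGT (hf : StrictAntiOn f (Ioi c))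
    (hl : Tendsto f (𝓝[>] c) (𝓝 l)) {t : ℝ} (ht : c < t) : f t < l := by
  have hmid : c < (c + t) / 2 := by linarith
  have hle : f ((c + t) / 2) ≤ l := ge_of_tendsto hl <| by
    filter_upwards [Ioo_mem_nhdsGT hmid] with s hs
    exact (hf hs.1 hmid hs.2).le
  exact (hf hmid ht (by linarith)).trans_le hle

theorem StrictAntiOn.sSup_eq_of_tendsto_nhdsGT (hf : StrictAntiOn f (Ioi c))
    (hl : Tendsto f (𝓝[>] c) (𝓝 l)) : sSup {r | ∃ t, c < t ∧ r = f t} = l := by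
  refine csSup_eq_of_forall_le_of_forall_lt_exists_gt ⟨_, c + 1, lt_add_one c, rfl⟩
    (fun _ ⟨t, ht, hr⟩ => hr ▸ (hf.lt_of_tendsto_nhdsGT hl ht).le) fun w hw => ?_
  obtain ⟨t, hwt, hct⟩ := ((hl.eventually (lt_mem_nhds hw)).and self_mem_nhdsWithin).exists
  exact ⟨f t, ⟨t, hct, rfl⟩, hwt⟩

end

theorem g_h_strictAnti_general (N : ℕ) (a b : ℝ) (ha0 : 0 < a)
    (ha : a < (N : ℝ) / ((N : ℝ) - 1)) (hb0 : 0 < b) (hb : b ≤ 1) :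
    StrictAntiOn (fun t : ℝ =>
        ((1+t) ^ (1/b) - 1) * (1+t) ^ (((N:ℝ)/((N:ℝ)-1))/a - 1/b) /
          t ^ (((N:ℝ)/((N:ℝ)-1))/a)) (Set.Ioi 0) ∧
    Tendsto (fun t : ℝ =>
        ((1+t) ^ (1/b) - 1) * (1+t) ^ (((N:ℝ)/((N:ℝ)-1))/a - 1/b) /
          t ^ (((N:ℝ)/((N:ℝ)-1))/a)) atTop (nhds 1) ∧
    sInf { r | ∃ t : ℝ, 0 < t ∧
        r = ((1+t) ^ (1/b) - 1) * (1+t) ^ (((N:ℝ)/((N:ℝ)-1))/a - 1/b) /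
              t ^ (((N:ℝ)/((N:ℝ)-1))/a) } = 1 ∧
    (¬ ∃ t : ℝ, 0 < t ∧
        ((1+t) ^ (1/b) - 1) * (1+t) ^ (((N:ℝ)/((N:ℝ)-1))/a - 1/b) /
            t ^ (((N:ℝ)/((N:ℝ)-1))/a) =
          sInf { r | ∃ t : ℝ, 0 < t ∧
            r = ((1+t) ^ (1/b) - 1) * (1+t) ^ (((N:ℝ)/((N:ℝ)-1))/a - 1/b) /
                  t ^ (((N:ℝ)/((N:ℝ)-1))/a) }) ∧
    StrictAntiOn (fun t : ℝ =>
        (1+t) ^ (((N:ℝ)/((N:ℝ)-1))/a - 1/b) /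
          ((1+t) ^ (((N:ℝ)/((N:ℝ)-1))/a) - t ^ (((N:ℝ)/((N:ℝ)-1))/a))) (Set.Ioi 0) ∧
    Tendsto (fun t : ℝ =>
        (1+t) ^ (((N:ℝ)/((N:ℝ)-1))/a - 1/b) /
          ((1+t) ^ (((N:ℝ)/((N:ℝ)-1))/a) - t ^ (((N:ℝ)/((N:ℝ)-1))/a)))
      (nhdsWithin 0 (Set.Ioi 0)) (nhds 1) ∧
    sSup { r | ∃ t : ℝ, 0 < t ∧
        r = (1+t) ^ (((N:ℝ)/((N:ℝ)-1))/a - 1/b) /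
              ((1+t) ^ (((N:ℝ)/((N:ℝ)-1))/a) - t ^ (((N:ℝ)/((N:ℝ)-1))/a)) } = 1 ∧
    ¬ ∃ t : ℝ, 0 < t ∧
        (1+t) ^ (((N:ℝ)/((N:ℝ)-1))/a - 1/b) /
            ((1+t) ^ (((N:ℝ)/((N:ℝ)-1))/a) - t ^ (((N:ℝ)/((N:ℝ)-1))/a)) =
          sSup { r | ∃ t : ℝ, 0 < t ∧
            r = (1+t) ^ (((N:ℝ)/((N:ℝ)-1))/a - 1/b) /
                  ((1+t) ^ (((N:ℝ)/((N:ℝ)-1))/a) - t ^ (((N:ℝ)/((N:ℝ)-1))/a)) } := by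
  set q := ((N : ℝ) / ((N : ℝ) - 1)) / a
  have hp : 1 ≤ 1 / b := one_le_one_div hb0 hb
  have hq : 1 < q := (one_lt_div ha0).2 ha
  have hg := strictAntiOn_g hp hq
  have hgl := tendsto_g_atTop (p := 1 / b) (by positivity) q
  have hh := strictAntiOn_h hp hq
  have hhl := tendsto_h_nhdsGT_zero (q := q) (1 / b) (by linarith)
  have hinf := hg.sInf_eq_of_tendsto_atTop hgl
  have hsup := hh.sSup_eq_of_tendsto_nhdsGT hhl
  refine ⟨hg, hgl, hinf, ?_, hh, hhl, hsup, ?_⟩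
  · rintro ⟨t, ht, heq⟩
    exact (hg.lt_of_tendsto_atTop hgl ht).ne' (heq.trans hinf)
  · rintro ⟨t, ht, heq⟩
    exact (hh.lt_of_tendsto_nhdsGT hhl ht).ne (heq.trans hsup)

/-- for `0 < a < 1*` and `0 < b ≤ 1`, both `g` and `h` are
strictly decreasing; `inf g = 1` and `sup h = 1`, and neither is attained. -/
theorem g_h_strictAnti (N : ℕ) (hN : 2 ≤ N) (a b : ℝ) (ha0 : 0 < a)
    (ha : a < (N : ℝ) / ((N : ℝ) - 1)) (hb0 : 0 < b) (hb : b ≤ 1) :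
    StrictAntiOn (fun t : ℝ =>
        ((1+t) ^ (1/b) - 1) * (1+t) ^ (((N:ℝ)/((N:ℝ)-1))/a - 1/b) /
          t ^ (((N:ℝ)/((N:ℝ)-1))/a)) (Set.Ioi 0) ∧
    Tendsto (fun t : ℝ =>
        ((1+t) ^ (1/b) - 1) * (1+t) ^ (((N:ℝ)/((N:ℝ)-1))/a - 1/b) /
          t ^ (((N:ℝ)/((N:ℝ)-1))/a)) atTop (nhds 1) ∧
    sInf { r | ∃ t : ℝ, 0 < t ∧
        r = ((1+t) ^ (1/b) - 1) * (1+t) ^ (((N:ℝ)/((N:ℝ)-1))/a - 1/b) /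
              t ^ (((N:ℝ)/((N:ℝ)-1))/a) } = 1 ∧
    (¬ ∃ t : ℝ, 0 < t ∧
        ((1+t) ^ (1/b) - 1) * (1+t) ^ (((N:ℝ)/((N:ℝ)-1))/a - 1/b) /
            t ^ (((N:ℝ)/((N:ℝ)-1))/a) =
          sInf { r | ∃ t : ℝ, 0 < t ∧
            r = ((1+t) ^ (1/b) - 1) * (1+t) ^ (((N:ℝ)/((N:ℝ)-1))/a - 1/b) /
                  t ^ (((N:ℝ)/((N:ℝ)-1))/a) }) ∧
    StrictAntiOn (fun t : ℝ =>
        (1+t) ^ (((N:ℝ)/((N:ℝ)-1))/a - 1/b) /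
          ((1+t) ^ (((N:ℝ)/((N:ℝ)-1))/a) - t ^ (((N:ℝ)/((N:ℝ)-1))/a))) (Set.Ioi 0) ∧
    Tendsto (fun t : ℝ =>
        (1+t) ^ (((N:ℝ)/((N:ℝ)-1))/a - 1/b) /
          ((1+t) ^ (((N:ℝ)/((N:ℝ)-1))/a) - t ^ (((N:ℝ)/((N:ℝ)-1))/a)))
      (nhdsWithin 0 (Set.Ioi 0)) (nhds 1) ∧
    sSup { r | ∃ t : ℝ, 0 < t ∧
        r = (1+t) ^ (((N:ℝ)/((N:ℝ)-1))/a - 1/b) /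
              ((1+t) ^ (((N:ℝ)/((N:ℝ)-1))/a) - t ^ (((N:ℝ)/((N:ℝ)-1))/a)) } = 1 ∧
    ¬ ∃ t : ℝ, 0 < t ∧
        (1+t) ^ (((N:ℝ)/((N:ℝ)-1))/a - 1/b) /
            ((1+t) ^ (((N:ℝ)/((N:ℝ)-1))/a) - t ^ (((N:ℝ)/((N:ℝ)-1))/a)) =
          sSup { r | ∃ t : ℝ, 0 < t ∧
            r = (1+t) ^ (((N:ℝ)/((N:ℝ)-1))/a - 1/b) /
                  ((1+t) ^ (((N:ℝ)/((N:ℝ)-1))/a) - t ^ (((N:ℝ)/((N:ℝ)-1))/a)) } :=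
  g_h_strictAnti_general N a b ha0 ha hb0 hb
end
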